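/- arXiv:2602.08073 — 10 statements merged into one kernel-verified Lean document; each statement's English description precedes it below -/
import Mathlib

section
/- Let E be a complex Hilbert space, H : E → E a bounded self-adjoint linear operator, r : ℝ → E a continuous map, and φ : ℝ → E a map such that for every t ≥ 0, φ is differentiable at t with derivative φ'(t) = i • (r(t) − H(φ(t))). Then for every T ≥ 0 one has ‖φ(T)‖ ≤ ‖φ(0)‖ + ∫₀ᵀ ‖r(s)‖ ds. -/
open scoped InnerProductSpace
open Set

/-- Energy estimate for an abstract Schrödinger equation `(D_t + H)φ = r` with `H`
bounded self-adjoint: `‖φ(T)‖ ≤ ‖φ(0)‖ + ∫₀ᵀ ‖r(s)‖ ds`. -/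
theorem stmt_0 {E : Type*} [NormedAddCommGroup E] [InnerProductSpace ℂ E] [CompleteSpace E]
    (H : E →L[ℂ] E) (hH : IsSelfAdjoint H)
    (r : ℝ → E) (hr : Continuous r)
    (φ : ℝ → E)
    (hφ : ∀ t : ℝ, 0 ≤ t → HasDerivAt φ (Complex.I • (r t - H (φ t))) t)
    (T : ℝ) (hT : 0 ≤ T) :
    ‖φ T‖ ≤ ‖φ 0‖ + ∫ s in (0:ℝ)..T, ‖r s‖ := by
  set ρ : ℝ → ℝ := fun t => ‖φ 0‖ + ∫ s in (0:ℝ)..t, ‖r s‖ with hρ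
  -- ρ has derivative ‖r t‖
  have hρ' : ∀ t : ℝ, HasDerivAt ρ ‖r t‖ t := fun t =>
    (hr.norm.integral_hasStrictDerivAt 0 t).hasDerivAt.const_add _
  have hρnn : ∀ t, 0 ≤ t → 0 ≤ ρ t := by
    intro t ht
    have : 0 ≤ ∫ s in (0:ℝ)..t, ‖r s‖ :=
      intervalIntegral.integral_nonneg ht (fun s _ => norm_nonneg _)
    positivity
  -- f = ‖φ‖² and its derivative
  set f : ℝ → ℝ := fun t => ‖φ t‖ ^ 2 with hf
  set f' : ℝ → ℝ := fun t => (-2 : ℝ) * (⟪φ t, r t⟫_ℂ).im with hf'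
  have hfderiv : ∀ t : ℝ, 0 ≤ t → HasDerivAt f (f' t) t := by
    intro t ht
    have h1 := (hφ t ht).inner ℂ (hφ t ht)
    have h2 : HasDerivAt (fun u => (⟪φ u, φ u⟫_ℂ).re)
        ((⟪φ t, Complex.I • (r t - H (φ t))⟫_ℂ + ⟪Complex.I • (r t - H (φ t)), φ t⟫_ℂ).re) t :=
      Complex.reCLM.hasFDerivAt.comp_hasDerivAt t h1
    have h3 : HasDerivAt f
        ((⟪φ t, Complex.I • (r t - H (φ t))⟫_ℂ + ⟪Complex.I • (r t - H (φ t)), φ t⟫_ℂ).re) t := by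
      refine h2.congr_of_eventuallyEq (Filter.Eventually.of_forall fun u => ?_)
      simp [hf, ← inner_self_eq_norm_sq (𝕜 := ℂ)]
    convert h3 using 1
    have hsym : ⟪H (φ t), φ t⟫_ℂ = ⟪φ t, H (φ t)⟫_ℂ := hH.isSymmetric (φ t) (φ t)
    have hconj : (starRingEnd ℂ) ⟪φ t, H (φ t)⟫_ℂ = ⟪φ t, H (φ t)⟫_ℂ := by
      rw [inner_conj_symm]; exact hsym
    have hreal : (⟪φ t, H (φ t)⟫_ℂ).im = 0 := (Complex.conj_eq_iff_im.mp hconj)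
    have e1 : ⟪Complex.I • (r t - H (φ t)), φ t⟫_ℂ =
        (starRingEnd ℂ) ⟪φ t, Complex.I • (r t - H (φ t))⟫_ℂ := (inner_conj_symm _ _).symm
    rw [e1]
    have e2 : ⟪φ t, Complex.I • (r t - H (φ t))⟫_ℂ =
        Complex.I * (⟪φ t, r t⟫_ℂ - ⟪φ t, H (φ t)⟫_ℂ) := by
      rw [inner_smul_right, inner_sub_right]
    rw [e2]
    simp only [hf', Complex.add_re, Complex.conj_re, Complex.mul_re, Complex.I_re, Complex.I_im,
      Complex.sub_im, Complex.sub_re, hreal]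
    ring
  -- main estimate with ε
  have key : ∀ ε : ℝ, 0 < ε → ‖φ T‖ ≤ ρ T + ε * (1 + T) := by
    intro ε hε
    set B : ℝ → ℝ := fun t => (ρ t + ε * (1 + t)) ^ 2 with hB
    set B' : ℝ → ℝ := fun t => 2 * (ρ t + ε * (1 + t)) * (‖r t‖ + ε) with hB'
    have hBderiv : ∀ t : ℝ, HasDerivAt B (B' t) t := by
      intro t
      have h := ((hρ' t).add (((hasDerivAt_id t).const_add 1).const_mul ε)).fun_pow 2
      refine h.congr_deriv (Eq.symm ?_)
      show 2 * (ρ t + ε * (1 + t)) * (‖r t‖ + ε) = _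
      simp only [id_eq, Pi.add_apply]
      push_cast
      ring
    have hφcont : ContinuousOn φ (Icc 0 T) := fun x hx =>
      ((hφ x hx.1).continuousAt).continuousWithinAt
    have hfcont : ContinuousOn f (Icc 0 T) := (hφcont.norm.pow 2)
    have main : ∀ ⦃x⦄, x ∈ Icc (0:ℝ) T → f x ≤ B x := by
      refine image_le_of_deriv_right_lt_deriv_boundary hfcont
        (fun x hx => ((hfderiv x hx.1).hasDerivWithinAt)) ?_ hBderiv ?_
      · simp only [hf, hB, hρ]
        rw [intervalIntegral.integral_same]
        nlinarith [norm_nonneg (φ 0), hε]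
      · intro x hx hfx
        have hpos : 0 < ρ x + ε * (1 + x) := by
          have := hρnn x hx.1
          nlinarith [hx.1]
        have hnφ : ‖φ x‖ = ρ x + ε * (1 + x) := by
          have h : ‖φ x‖ ^ 2 = (ρ x + ε * (1 + x)) ^ 2 := hfx
          have := congrArg Real.sqrt h
          rwa [Real.sqrt_sq (norm_nonneg _), Real.sqrt_sq hpos.le] at this
        have hb : f' x ≤ 2 * ‖φ x‖ * ‖r x‖ := by
          have h1 : |(⟪φ x, r x⟫_ℂ).im| ≤ ‖(⟪φ x, r x⟫_ℂ)‖ := Complex.abs_im_le_norm _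
          have h2 : ‖(⟪φ x, r x⟫_ℂ)‖ ≤ ‖φ x‖ * ‖r x‖ := norm_inner_le_norm _ _
          have := abs_le.1 h1
          simp only [hf']
          nlinarith
        have : 2 * ‖φ x‖ * ‖r x‖ < B' x := by
          rw [hnφ]
          simp only [hB']
          nlinarith [norm_nonneg (r x)]
        linarith
    have hTm : T ∈ Icc (0:ℝ) T := ⟨hT, le_refl T⟩
    have hfB := main hTm
    have hnn : 0 ≤ ρ T + ε * (1 + T) := by nlinarith [hρnn T hT]
    have := Real.sqrt_le_sqrt hfB
    simp only [hf, hB] at this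
    rwa [Real.sqrt_sq (norm_nonneg _), Real.sqrt_sq hnn] at this
  -- let ε → 0
  by_contra hcon
  push_neg at hcon
  set δ := ‖φ T‖ - ρ T with hδ
  have hδpos : 0 < δ := by simp only [hδ, hρ]; linarith
  have := key (δ / (2 * (1 + T))) (by positivity)
  have h1T : 0 < 1 + T := by linarith
  rw [div_mul_eq_mul_div, mul_comm] at this
  have : ‖φ T‖ ≤ ρ T + δ / 2 := by
    calc ‖φ T‖ ≤ ρ T + (1 + T) * δ / (2 * (1 + T)) := this
    _ = ρ T + δ / 2 := by field_simp
  simp only [hδ, hρ] at this hδpos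
  linarith
end

section
/- Let E be a complex Hilbert space, H : E → E a bounded self-adjoint linear operator, ε, δ > 0 and M ∈ ℕ. Suppose u : ℝ → E satisfies u(0) = 0 and, for every t ≥ 0, u is differentiable at t with derivative u'(t) = i • (r(t) − H(u(t))) for some continuous r : ℝ → E obeying ‖r(t)‖ ≤ ε(1 + (δt)^M) for all t ≥ 0. Then ‖u(t)‖ ≤ ε t (1 + (δt)^M) for every t ≥ 0. -/
theorem key {E : Type*} [NormedAddCommGroup E] [InnerProductSpace ℂ E] [CompleteSpace E]
    (H : E →L[ℂ] E) (hH : IsSelfAdjoint H) (x y : E) :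
    letI : InnerProductSpace ℝ E := InnerProductSpace.complexToReal
    (inner ℝ (Complex.I • (y - H x)) x : ℝ) ≤ ‖y‖ * ‖x‖ := by
  letI : InnerProductSpace ℝ E := InnerProductSpace.complexToReal
  have hsa : inner ℂ (H x) x = (inner ℂ x (H x) : ℂ) := by
    conv_lhs => rw [← hH.adjoint_eq]
    exact ContinuousLinearMap.adjoint_inner_left H x x
  have him : (inner ℂ (H x) x : ℂ).im = 0 := by
    have h2 : (starRingEnd ℂ) (inner ℂ (H x) x) = inner ℂ (H x) x := by
      rw [inner_conj_symm]; exact hsa.symm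
    have h3 := congrArg Complex.im h2
    simp only [Complex.conj_im] at h3
    linarith
  have hre : (inner ℝ (Complex.I • (y - H x)) x : ℝ) = (inner ℂ (y - H x) x : ℂ).im := by
    show ((inner ℂ (Complex.I • (y - H x)) x : ℂ)).re = _
    rw [inner_smul_left]
    simp [Complex.mul_re, inner_sub_left]
  rw [hre, inner_sub_left]
  calc (inner ℂ y x - inner ℂ (H x) x : ℂ).im = (inner ℂ y x : ℂ).im := by
        simp [him]
    _ ≤ ‖(inner ℂ y x : ℂ)‖ := by
        simpa using (le_abs_self _).trans (Complex.abs_im_le_norm (inner ℂ y x))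
    _ ≤ ‖y‖ * ‖x‖ := norm_inner_le_norm y x


/-- Lemma C.3 of the paper, `m = 0` case: an initially vanishing solution of an
abstract Schrödinger equation `(D_t + H)u = r` driven by a source of size
`ε(1 + (δt)^M)` grows at most like `ε t (1 + (δt)^M)`. -/
theorem stmt_1 {E : Type*} [NormedAddCommGroup E] [InnerProductSpace ℂ E] [CompleteSpace E]
    (H : E →L[ℂ] E) (hH : IsSelfAdjoint H)
    (ε δ : ℝ) (hε : 0 < ε) (hδ : 0 < δ) (M : ℕ)
    (u : ℝ → E) (hu0 : u 0 = 0)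
    (r : ℝ → E) (hr : Continuous r)
    (hrbd : ∀ t : ℝ, 0 ≤ t → ‖r t‖ ≤ ε * (1 + (δ * t) ^ M))
    (hu : ∀ t : ℝ, 0 ≤ t → HasDerivAt u (Complex.I • (r t - H (u t))) t) :
    ∀ t : ℝ, 0 ≤ t → ‖u t‖ ≤ ε * t * (1 + (δ * t) ^ M) := by
  letI : InnerProductSpace ℝ E := InnerProductSpace.complexToReal
  intro T hT
  refine le_of_forall_pos_le_add fun η hη => ?_
  set ρ : ℝ → ℝ := fun t => ε * (1 + (δ * t) ^ M) with hρ
  set B : ℝ → ℝ := fun t => ε * t * (1 + (δ * t) ^ M) with hB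
  set g : ℝ → ℝ := fun t => inner ℝ (u t) (u t) with hg
  set w : ℝ → ℝ := fun t => Real.sqrt (g t + η ^ 2) with hw
  set φ : ℝ → ℝ := fun t => B t + η - w t with hφdef
  -- positivity facts
  have hgnorm : ∀ t, g t = ‖u t‖ ^ 2 := fun t => real_inner_self_eq_norm_sq (u t)
  have hgpos : ∀ t, 0 < g t + η ^ 2 := fun t => by
    have := hgnorm t; nlinarith [sq_nonneg ‖u t‖]
  have hwpos : ∀ t, 0 < w t := fun t => Real.sqrt_pos.mpr (hgpos t)
  have hule : ∀ t, ‖u t‖ ≤ w t := fun t => by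
    rw [hw]
    calc ‖u t‖ = Real.sqrt (g t) := by rw [hgnorm t, Real.sqrt_sq (norm_nonneg _)]
      _ ≤ _ := Real.sqrt_le_sqrt (by nlinarith [sq_nonneg η])
  -- derivative facts for t ≥ 0
  have hDφ : ∀ t, 0 ≤ t → HasDerivAt φ
      ((ρ t + ε * t * (↑M * (δ * t) ^ (M - 1) * δ))
        - (inner ℝ (Complex.I • (r t - H (u t))) (u t)
            + inner ℝ (Complex.I • (r t - H (u t))) (u t)) / (2 * w t)) t := by
    intro t ht
    have hgd : HasDerivAt (fun s => g s + η ^ 2)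
        (inner ℝ (Complex.I • (r t - H (u t))) (u t)
          + inner ℝ (Complex.I • (r t - H (u t))) (u t)) t := by
      have := ((hu t ht).inner ℝ (hu t ht)).add_const (η ^ 2)
      simpa [hg, real_inner_comm] using this
    have hwd : HasDerivAt w
        ((inner ℝ (Complex.I • (r t - H (u t))) (u t)
          + inner ℝ (Complex.I • (r t - H (u t))) (u t)) / (2 * w t)) t := by
      have := hgd.sqrt (ne_of_gt (hgpos t))
      simpa [hw] using this
    have hBd : HasDerivAt B (ρ t + ε * t * (↑M * (δ * t) ^ (M - 1) * δ)) t := by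
      have h1 : HasDerivAt (fun s : ℝ => ε * s) ε t := by
        simpa using (hasDerivAt_id t).const_mul ε
      have h2 : HasDerivAt (fun s : ℝ => 1 + (δ * s) ^ M)
          (↑M * (δ * t) ^ (M - 1) * δ) t := by
        have : HasDerivAt (fun s : ℝ => δ * s) δ t := by
          simpa using (hasDerivAt_id t).const_mul δ
        simpa using (this.pow M).const_add 1
      have := h1.mul h2
      simpa [Pi.mul_def, hρ, hB, mul_comm, mul_assoc, mul_left_comm] using this
    exact (hBd.add_const η).sub hwd
  -- monotonicity of φ on [0, ∞)
  have hmono : MonotoneOn φ (Set.Ici 0) := by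
    refine monotoneOn_of_deriv_nonneg (convex_Ici 0) ?_ ?_ ?_
    · intro t ht
      exact (hDφ t ht).continuousAt.continuousWithinAt
    · intro t ht
      rw [interior_Ici] at ht
      exact ((hDφ t (le_of_lt ht)).differentiableAt).differentiableWithinAt
    · intro t ht
      rw [interior_Ici] at ht
      have ht0 : (0 : ℝ) ≤ t := le_of_lt ht
      rw [(hDφ t ht0).deriv]
      have hd : (inner ℝ (Complex.I • (r t - H (u t))) (u t) : ℝ) ≤ ρ t * ‖u t‖ := by
        calc (inner ℝ (Complex.I • (r t - H (u t))) (u t) : ℝ) ≤ ‖r t‖ * ‖u t‖ :=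
              key H hH (u t) (r t)
          _ ≤ ρ t * ‖u t‖ := by
              exact mul_le_mul_of_nonneg_right (hrbd t ht0) (norm_nonneg _)
      have hρpos : 0 < ρ t := by
        have : (0:ℝ) ≤ (δ * t) ^ M := by positivity
        show 0 < ε * (1 + (δ * t) ^ M); nlinarith
      have hquot : (inner ℝ (Complex.I • (r t - H (u t))) (u t)
          + inner ℝ (Complex.I • (r t - H (u t))) (u t)) / (2 * w t) ≤ ρ t := by
        rw [div_le_iff₀ (mul_pos two_pos (hwpos t))]
        have h1 : ‖u t‖ ≤ w t := hule t
        nlinarith [hd, hρpos.le, hwpos t]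
      have h2nd : 0 ≤ ε * t * (↑M * (δ * t) ^ (M - 1) * δ) := by positivity
      linarith
  -- conclude
  have hφ0 : φ 0 = 0 := by
    have : g 0 = 0 := by simp [hg, hu0]
    simp [hφdef, hw, hB, this, Real.sqrt_sq hη.le]
  have := hmono (Set.self_mem_Ici) hT hT
  rw [hφ0] at this
  have : w T ≤ B T + η := by simpa [hφdef] using this
  exact (hule T).trans this
end

section
/- Let m, M ∈ ℕ and ε, δ, c > 0. Suppose g₀, g₁, …, g_m : [0,∞) → [0,∞) are differentiable functions with g_N(0) = 0 for all 0 ≤ N ≤ m, satisfying g₀'(t) ≤ ε(1 + (δt)^M) for all t ≥ 0, and g_N'(t) ≤ ε(1 + (δt)^M) + c δ g_{N−1}(t) for all 1 ≤ N ≤ m and t ≥ 0. Then there exists a constant C > 0, depending only on m, M and c, such that g_N(t) ≤ C ε t (1 + (δt)^{N+M}) for all 0 ≤ N ≤ m and t ≥ 0. -/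
/-- For `0 ≤ x` and `a ≤ b`, `x ^ a ≤ 1 + x ^ b`. -/
lemma pow_le_one_add_pow {x : ℝ} (hx : 0 ≤ x) {a b : ℕ} (h : a ≤ b) :
    x ^ a ≤ 1 + x ^ b := by
  rcases le_total x 1 with hx1 | hx1
  · have : x ^ a ≤ 1 := pow_le_one₀ hx hx1
    nlinarith [pow_nonneg hx b]
  · have : x ^ a ≤ x ^ b := pow_le_pow_right₀ hx1 h
    nlinarith

/-- Comparison of two functions on `[0, ∞)` via their derivatives. -/
lemma le_of_deriv_le' {f F f' F' : ℝ → ℝ}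
    (hf : ∀ t, 0 ≤ t → HasDerivWithinAt f (f' t) (Set.Ici 0) t)
    (hF : ∀ t, 0 ≤ t → HasDerivWithinAt F (F' t) (Set.Ici 0) t)
    (h0 : f 0 ≤ F 0) (hd : ∀ t, 0 ≤ t → f' t ≤ F' t) :
    ∀ t, 0 ≤ t → f t ≤ F t := by
  have hmono : MonotoneOn (fun t => F t - f t) (Set.Ici 0) := by
    apply monotoneOn_of_hasDerivWithinAt_nonneg (convex_Ici 0)
      (f' := fun t => F' t - f' t)
    · intro t ht
      exact ((hF t ht).sub (hf t ht)).continuousWithinAt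
    · intro x hx
      rw [interior_Ici] at hx ⊢
      exact (((hF x hx.le).sub (hf x hx.le)).mono (Set.Ioi_subset_Ici_self))
    · intro x hx
      rw [interior_Ici] at hx
      have := hd x hx.le
      linarith
  intro t ht
  have := hmono Set.self_mem_Ici ht ht
  simp only at this
  linarith

/-- Antiderivative building block: `a * s^(n+1)/(n+1)` has derivative `a * s^n`. -/
lemma haux (a : ℝ) (n : ℕ) (t : ℝ) :
    HasDerivWithinAt (fun s : ℝ => a * s ^ (n + 1) / (n + 1)) (a * t ^ n) (Set.Ici 0) t := by
  have h := (((hasDerivAt_pow (n + 1) t).const_mul a).div_const ((n : ℝ) + 1)).hasDerivWithinAt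
    (s := Set.Ici 0)
  have hn : ((n : ℝ) + 1) ≠ 0 := by positivity
  refine h.congr_deriv ?_
  push_cast
  field_simp

set_option maxHeartbeats 1600000 in
/-- Iterated differential-inequality argument of Lemma C.3: the constant `C`
depends only on `m`, `M` and `c`. -/
theorem stmt_2 (m M : ℕ) (c : ℝ) (hc : 0 < c) :
    ∃ C : ℝ, 0 < C ∧
      ∀ (ε δ : ℝ), 0 < ε → 0 < δ →
        ∀ (g g' : ℕ → ℝ → ℝ),
          (∀ N ≤ m, ∀ t : ℝ, 0 ≤ t → 0 ≤ g N t) →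
          (∀ N ≤ m, ∀ t : ℝ, 0 ≤ t → HasDerivWithinAt (g N) (g' N t) (Set.Ici 0) t) →
          (∀ N ≤ m, g N 0 = 0) →
          (∀ t : ℝ, 0 ≤ t → g' 0 t ≤ ε * (1 + (δ * t) ^ M)) →
          (∀ N, 1 ≤ N → N ≤ m → ∀ t : ℝ, 0 ≤ t →
            g' N t ≤ ε * (1 + (δ * t) ^ M) + c * δ * g (N - 1) t) →
          ∀ N ≤ m, ∀ t : ℝ, 0 ≤ t → g N t ≤ C * ε * t * (1 + (δ * t) ^ (N + M)) := by
  set c' : ℝ := max c 1 with hc'def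
  have hc'1 : (1 : ℝ) ≤ c' := le_max_right _ _
  have hcc' : c ≤ c' := le_max_left _ _
  set D : ℝ := 2 + 2 * c' with hDdef
  have hD1 : (1 : ℝ) ≤ D := by simp only [hDdef]; linarith
  have hD0 : (0 : ℝ) < D := by linarith
  clear_value c' D
  refine ⟨D ^ (m + 1), by positivity, ?_⟩
  intro ε δ hε hδ g g' hg hderiv h0 hd0 hdN
  have key : ∀ N, N ≤ m → ∀ t : ℝ, 0 ≤ t →
      g N t ≤ D ^ (N + 1) * ε * t * (1 + (δ * t) ^ (N + M)) := by
    intro N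
    induction N with
    | zero =>
      intro _ t ht
      -- antiderivative F s = ε s + ε δ^M s^{M+1}/(M+1)
      set F : ℝ → ℝ := fun s => ε * s ^ (0 + 1) / ((0 : ℕ) + 1)
        + (ε * δ ^ M) * s ^ (M + 1) / ((M : ℝ) + 1) with hF
      have hFle : g 0 t ≤ F t := by
        refine le_of_deriv_le' (hderiv 0 (Nat.zero_le m)) (fun s hs => (haux ε 0 s).add (haux (ε * δ ^ M) M s)) ?_ ?_ t ht
        · rw [h0 0 (Nat.zero_le m)]; simp [hF]
        · intro s hs
          have := hd0 s hs
          calc g' 0 s ≤ ε * (1 + (δ * s) ^ M) := this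
            _ = ε * s ^ 0 + ε * δ ^ M * s ^ M := by rw [mul_pow]; ring
      have hbound : F t ≤ D ^ (0 + 1) * ε * t * (1 + (δ * t) ^ (0 + M)) := by
        have h1 : ε * t ^ (0 + 1) / ((0 : ℕ) + 1) = ε * t := by norm_num
        have h2 : (ε * δ ^ M) * t ^ (M + 1) / ((M : ℝ) + 1) ≤ ε * t * (δ * t) ^ M := by
          rw [mul_pow, div_le_iff₀ (by positivity)]
          have hbase : (0:ℝ) ≤ ε * t * (δ ^ M * t ^ M) := by positivity
          have hM1 : (1:ℝ) ≤ (M:ℝ) + 1 := by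
            have := Nat.cast_nonneg (α := ℝ) M; linarith
          have heq : ε * δ ^ M * t ^ (M + 1) = ε * t * (δ ^ M * t ^ M) := by ring
          rw [heq]
          exact le_mul_of_one_le_right hbase hM1
        have hx : (0:ℝ) ≤ (δ * t) ^ (0 + M) := by positivity
        have : F t ≤ ε * t * (1 + (δ * t) ^ (0 + M)) := by
          simp only [hF, h1, zero_add] at *
          nlinarith
        calc F t ≤ ε * t * (1 + (δ * t) ^ (0 + M)) := this
          _ = 1 * (ε * t * (1 + (δ * t) ^ (0 + M))) := by ring
          _ ≤ D ^ (0 + 1) * (ε * t * (1 + (δ * t) ^ (0 + M))) := by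
              have h1D : (1:ℝ) ≤ D ^ (0+1) := by simpa using hD1
              exact mul_le_mul_of_nonneg_right h1D (by positivity)
          _ = D ^ (0 + 1) * ε * t * (1 + (δ * t) ^ (0 + M)) := by ring
      exact hFle.trans hbound
    | succ N ih =>
      intro hNm t ht
      have hNm' : N ≤ m := Nat.le_of_succ_le hNm
      have ihN := ih hNm'
      set K : ℕ := N + M with hK
      set A : ℝ := D ^ (N + 1) * ε with hA
      have hA0 : 0 < A := by positivity
      clear_value K A
      set F : ℝ → ℝ := fun s => ε * s ^ (0 + 1) / ((0 : ℕ) + 1)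
        + (ε * δ ^ M) * s ^ (M + 1) / ((M : ℝ) + 1)
        + (c' * δ * A) * s ^ (1 + 1) / ((1 : ℕ) + 1)
        + (c' * δ * A * δ ^ K) * s ^ (K + 1 + 1) / ((K + 1 : ℕ) + 1) with hF
      have hFderiv : ∀ s, 0 ≤ s → HasDerivWithinAt F
          (ε * s ^ 0 + ε * δ ^ M * s ^ M + c' * δ * A * s ^ 1 + c' * δ * A * δ ^ K * s ^ (K + 1))
          (Set.Ici 0) s := by
        intro s hs
        exact (((haux ε 0 s).add (haux (ε * δ ^ M) M s)).add (haux (c' * δ * A) 1 s)).add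
          (haux (c' * δ * A * δ ^ K) (K + 1) s)
      have hFle : g (N + 1) t ≤ F t := by
        refine le_of_deriv_le' (hderiv (N + 1) hNm) hFderiv ?_ ?_ t ht
        · rw [h0 (N + 1) hNm]; simp [hF]
        · intro s hs
          have hds := hdN (N + 1) (Nat.le_add_left 1 N) hNm s hs
          simp only [Nat.add_sub_cancel] at hds
          have hgN := ihN s hs
          have hgN0 := hg N hNm' s hs
          have h1 : c * δ * g N s ≤ c' * δ * (A * s * (1 + (δ * s) ^ K)) := by
            calc c * δ * g N s ≤ c' * δ * g N s :=
                mul_le_mul_of_nonneg_right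
                  (mul_le_mul_of_nonneg_right hcc' hδ.le) hgN0
              _ ≤ c' * δ * (A * s * (1 + (δ * s) ^ K)) := by
                  have hc'δ : 0 ≤ c' * δ := by positivity
                  exact mul_le_mul_of_nonneg_left hgN hc'δ
          have hexp : c' * δ * (A * s * (1 + (δ * s) ^ K))
              = c' * δ * A * s ^ 1 + c' * δ * A * δ ^ K * s ^ (K + 1) := by
            rw [mul_pow]; ring
          calc g' (N + 1) s ≤ ε * (1 + (δ * s) ^ M) + c * δ * g N s := hds
            _ ≤ ε * s ^ 0 + ε * δ ^ M * s ^ M + (c' * δ * A * s ^ 1 + c' * δ * A * δ ^ K * s ^ (K + 1)) := by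
                rw [← hexp]
                have : ε * (1 + (δ * s) ^ M) = ε * s ^ 0 + ε * δ ^ M * s ^ M := by
                  rw [mul_pow]; ring
                linarith
            _ = ε * s ^ 0 + ε * δ ^ M * s ^ M + c' * δ * A * s ^ 1 + c' * δ * A * δ ^ K * s ^ (K + 1) := by ring
      -- now bound F t
      set x : ℝ := δ * t with hx
      have hx0 : 0 ≤ x := by positivity
      clear_value x
      set L : ℕ := N + 1 + M with hL
      clear_value L
      have hxL : (0:ℝ) ≤ x ^ L := pow_nonneg hx0 L
      have hML : M ≤ L := by omega
      have h1L : 1 ≤ L := by omega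
      have hKL : K + 1 = L := by omega
      have hεt : 0 ≤ ε * t := by positivity
      -- term bounds
      have hb1 : ε * t ^ (0 + 1) / ((0 : ℕ) + 1) = ε * t := by norm_num
      have hb2 : (ε * δ ^ M) * t ^ (M + 1) / ((M : ℝ) + 1) ≤ ε * t * x ^ M := by
        rw [hx, mul_pow, div_le_iff₀ (by positivity)]
        have hbase : (0:ℝ) ≤ ε * t * (δ ^ M * t ^ M) := by positivity
        have hM1 : (1:ℝ) ≤ (M:ℝ) + 1 := by
          have := Nat.cast_nonneg (α := ℝ) M; linarith
        have heq : ε * δ ^ M * t ^ (M + 1) = ε * t * (δ ^ M * t ^ M) := by ring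
        rw [heq]
        exact le_mul_of_one_le_right hbase hM1
      have hb3 : (c' * δ * A) * t ^ (1 + 1) / ((1 : ℕ) + 1) ≤ c' * A * t * x := by
        have hc'0 : (0:ℝ) < c' := lt_of_lt_of_le one_pos hc'1
        rw [hx, div_le_iff₀ (by positivity)]
        have hnn : (0:ℝ) ≤ c' * A * t * (δ * t) := by positivity
        have heq : (c' * δ * A) * t ^ (1 + 1) = c' * A * t * (δ * t) := by ring
        have h2 : (1:ℝ) ≤ ((1:ℕ):ℝ) + 1 := by norm_num
        rw [heq]
        exact le_mul_of_one_le_right hnn h2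
      have hb4 : (c' * δ * A * δ ^ K) * t ^ (K + 1 + 1) / ((K + 1 : ℕ) + 1) ≤ c' * A * t * x ^ (K + 1) := by
        have hc'0 : (0:ℝ) < c' := lt_of_lt_of_le one_pos hc'1
        rw [hx, mul_pow, div_le_iff₀ (by positivity)]
        have he : (c' * δ * A * δ ^ K) * t ^ (K + 1 + 1) = c' * A * t * (δ ^ (K+1) * t ^ (K+1)) := by ring
        have hnn : (0:ℝ) ≤ c' * A * t * (δ ^ (K+1) * t ^ (K+1)) := by positivity
        have hK1 : (1:ℝ) ≤ ((K + 1 : ℕ):ℝ) + 1 := by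
          have := Nat.cast_nonneg (α := ℝ) (K+1); linarith
        rw [he]
        exact le_mul_of_one_le_right hnn hK1
      -- small power comparisons
      have hpM : x ^ M ≤ 1 + x ^ L := pow_le_one_add_pow hx0 hML
      have hpx : x ≤ 1 + x ^ L := by simpa using pow_le_one_add_pow hx0 h1L
      have hpK : x ^ (K + 1) = x ^ L := by rw [hKL]
      have hc'0 : (0:ℝ) < c' := lt_of_lt_of_le one_pos hc'1
      have hFbound : F t ≤ (2 * ε + 2 * c' * A) * t * (1 + x ^ L) := by
        have t1 : ε * t * x ^ M ≤ ε * t * (1 + x ^ L) := mul_le_mul_of_nonneg_left hpM hεt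
        have t2 : c' * A * t * x ≤ c' * A * t * (1 + x ^ L) :=
          mul_le_mul_of_nonneg_left hpx (by positivity)
        have t3 : c' * A * t * x ^ (K + 1) ≤ c' * A * t * (1 + x ^ L) := by
          rw [hpK]
          exact mul_le_mul_of_nonneg_left (le_add_of_nonneg_left zero_le_one)
            (by positivity)
        have t0 : ε * t ≤ ε * t * (1 + x ^ L) := by nlinarith [mul_nonneg hεt hxL]
        simp only [hF, hb1]
        linarith [hb2, hb3, hb4]
      have hfinal : (2 * ε + 2 * c' * A) * t * (1 + x ^ L)
          ≤ D ^ (N + 1 + 1) * ε * t * (1 + x ^ L) := by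
        have hDN : (1:ℝ) ≤ D ^ (N + 1) := one_le_pow₀ hD1
        have hεA : ε ≤ A := by
          rw [hA]
          nlinarith [hDN, hε]
        have hcoef : 2 * ε + 2 * c' * A ≤ D ^ (N + 1 + 1) * ε := by
          have h1 : 2 * ε + 2 * c' * A ≤ (2 + 2 * c') * A := by nlinarith [hεA]
          have h2 : (2 + 2 * c') * A = D ^ (N + 1 + 1) * ε := by
            rw [hA, pow_succ, hDdef]; ring
          linarith
        have := mul_le_mul_of_nonneg_right (mul_le_mul_of_nonneg_right hcoef ht)
          (by positivity : (0:ℝ) ≤ 1 + x ^ L)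
        linarith
      calc g (N + 1) t ≤ F t := hFle
        _ ≤ (2 * ε + 2 * c' * A) * t * (1 + x ^ L) := hFbound
        _ ≤ D ^ (N + 1 + 1) * ε * t * (1 + x ^ L) := hfinal
  intro N hN t ht
  have hkey := key N hN t ht
  have hmono : D ^ (N + 1) ≤ D ^ (m + 1) := pow_le_pow_right₀ hD1 (by omega)
  have hnn : (0:ℝ) ≤ ε * t * (1 + (δ * t) ^ (N + M)) := by positivity
  calc g N t ≤ D ^ (N + 1) * ε * t * (1 + (δ * t) ^ (N + M)) := hkey
    _ ≤ D ^ (m + 1) * ε * t * (1 + (δ * t) ^ (N + M)) := by nlinarith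
end

section
/- Let d ≥ 1 be an integer, L ≥ 0 and δ > 0 with δL < 2, and let a : ℝ^d → ℝ^d be Lipschitz with constant L. Then there exists a bijection y : ℝ^d → ℝ^d such that for every x ∈ ℝ^d, x − y(x) + a((δ/2)(x + y(x))) = 0; in particular the solution map of the implicit equation is injective and surjective on ℝ^d. -/
/-!
The relation `y = x + a (c • (x + y))` with `‖c‖ * Lip(a) < 1` is uniquely solvable in `y` for
each `x`, and (rewritten as `x = y - a (c • (y + x))`) uniquely solvable in `x` for each `y`, both by
the Banach fixed point theorem. A relation that is uniquely solvable in both variables is the graph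
of a bijection.
-/

open NNReal Function

theorem exists_bijective_of_existsUnique {α β : Type*} {R : α → β → Prop}
    (hleft : ∀ x, ∃! y, R x y) (hright : ∀ y, ∃! x, R x y) :
    ∃ f : α → β, Bijective f ∧ ∀ x, R x (f x) := by
  choose f hf using fun x ↦ (hleft x).exists
  refine ⟨f, ⟨fun x₁ x₂ h ↦ (hright (f x₂)).unique (h ▸ hf x₁) (hf x₂), fun y ↦ ?_⟩, hf⟩
  obtain ⟨x, hx, -⟩ := hright y
  exact ⟨x, (hleft x).unique (hf x) hx⟩

section
variable {𝕜 E : Type*} [NormedField 𝕜] [NormedAddCommGroup E] [NormedSpace 𝕜 E]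

theorem LipschitzWith.const_add_comp_smul_const_add {K : ℝ≥0} {a : E → E}
    (ha : LipschitzWith K a) (c : 𝕜) (u v : E) :
    LipschitzWith (‖c‖₊ * K) fun w ↦ u + a (c • (v + w)) := by
  have := (isometry_add_left u).lipschitz.comp
    (ha.comp ((lipschitzWith_smul c).comp (isometry_add_left v).lipschitz))
  rwa [one_mul, mul_one, mul_comm] at this

variable [CompleteSpace E]

theorem existsUnique_eq_add_comp_smul_add {K : ℝ≥0} {a : E → E} (ha : LipschitzWith K a)
    {c : 𝕜} (hc : ‖c‖₊ * K < 1) (u : E) : ∃! w, w = u + a (c • (u + w)) := by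
  have hf : ContractingWith (‖c‖₊ * K) fun w ↦ u + a (c • (u + w)) :=
    ⟨hc, ha.const_add_comp_smul_const_add c u u⟩
  exact ⟨_, hf.fixedPoint_isFixedPt.symm, fun w hw ↦ hf.fixedPoint_unique hw.symm⟩

end

theorem stmt_5_general (d : ℕ) (L δ : ℝ) (hδ : 0 < δ) (hδL : δ * L < 2)
    (a : EuclideanSpace ℝ (Fin d) → EuclideanSpace ℝ (Fin d))
    (ha : ∀ x y, ‖a x - a y‖ ≤ L * ‖x - y‖) :
    ∃ y : EuclideanSpace ℝ (Fin d) → EuclideanSpace ℝ (Fin d),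
      Function.Bijective y ∧ ∀ x, x - y x + a ((δ / 2) • (x + y x)) = 0 := by
  have hlip : LipschitzWith L.toNNReal a := .of_dist_le_mul fun x y ↦ by
    simpa only [dist_eq_norm] using
      (ha x y).trans (mul_le_mul_of_nonneg_right (Real.le_coe_toNNReal L) (norm_nonneg _))
  have hc : ‖δ / 2‖₊ * L.toNNReal < 1 := by
    rw [← NNReal.coe_lt_coe, NNReal.coe_mul, coe_nnnorm, Real.norm_of_nonneg (by positivity),
      Real.coe_toNNReal', NNReal.coe_one]
    rcases max_cases L 0 with ⟨hmax, -⟩ | ⟨hmax, -⟩ <;> rw [hmax] <;> linarith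
  obtain ⟨y, hy, hyx⟩ := exists_bijective_of_existsUnique
    (R := fun x y ↦ y = x + a ((δ / 2) • (x + y)))
    (existsUnique_eq_add_comp_smul_add hlip hc) fun y ↦ by
      refine (existsUnique_congr fun x ↦ ?_).mp (existsUnique_eq_add_comp_smul_add hlip.neg hc y)
      rw [Pi.neg_apply, eq_add_neg_iff_add_eq, add_comm y, eq_comm]
  refine ⟨y, hy, fun x ↦ ?_⟩
  rw [sub_add_eq_add_sub, sub_eq_zero]
  exact (hyx x).symm

/-- Appendix E.2 of the paper: the solution map of the implicit equation
`x − y + a((δ/2)(x + y)) = 0` is a bijection of `ℝ^d`. -/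
theorem stmt_5 (d : ℕ) (hd : 1 ≤ d) (L δ : ℝ) (hL : 0 ≤ L) (hδ : 0 < δ) (hδL : δ * L < 2)
    (a : EuclideanSpace ℝ (Fin d) → EuclideanSpace ℝ (Fin d))
    (ha : ∀ x y, ‖a x - a y‖ ≤ L * ‖x - y‖) :
    ∃ y : EuclideanSpace ℝ (Fin d) → EuclideanSpace ℝ (Fin d),
      Function.Bijective y ∧ ∀ x, x - y x + a ((δ / 2) • (x + y x)) = 0 :=
  stmt_5_general d L δ hδ hδL a ha
end

section
/- For every integer p ≥ 1 and every θ ∈ ℝ, one has 2^{−p} Σ_{m ∈ I_p} binom(p, m) exp(i(2m − p)θ) = (1/3)[cos^p θ + ((−1)^{p−1}/2)(cos^p(θ + π/3) + cos^p(θ − π/3))] + i (√3/6)(−1)^{p−1}[cos^p(θ + π/3) − cos^p(θ − π/3)], where I_p := {m ∈ ℕ : m ≤ p and 3 divides p + m − 1}. -/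
/-! The indicator of `3 ∣ n` is `(1 + ωⁿ + ω²ⁿ) / 3` for a primitive cube root of unity `ω`, so
the filtered binomial sum is `(1/3) Σⱼ ω^{j(p-1)} (ωʲ e^{iθ} + e^{-iθ})^p`. Taking `ω = ζ²` with
`ζ = e^{iπ/3}`, each `ζ^{2j} e^{iθ} + e^{-iθ}` equals `2 ζʲ cos(θ + jπ/3)`, and `ζ³ = -1` collapses
the phases to `(-1)^{p-1} ζ` and `(-1)^{p-1} (1 - ζ) = (-1)^{p-1} ζ̄`. -/

open Complex Finset
open scoped Real

section RootsOfUnityFilter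

variable {R : Type*} [CommRing R] {ω : R}

lemma pow_three_eq_one_of_one_add_add_sq_eq_zero (hω : 1 + ω + ω ^ 2 = 0) : ω ^ 3 = 1 := by
  linear_combination (ω - 1) * hω

lemma ite_three_dvd_eq_one_add_pow_add_pow (hω : 1 + ω + ω ^ 2 = 0) (n : ℕ) :
    (if 3 ∣ n then 3 else 0 : R) = 1 + ω ^ n + (ω ^ n) ^ 2 := by
  have hω3 := pow_three_eq_one_of_one_add_add_sq_eq_zero hω
  rw [pow_eq_pow_mod n hω3]
  simp only [Nat.dvd_iff_mod_eq_zero]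
  have : n % 3 < 3 := Nat.mod_lt n (by norm_num)
  interval_cases n % 3
  · norm_num
  · simpa using hω.symm
  · norm_num
    linear_combination -hω - ω * hω3

lemma three_mul_sum_filter_dvd_add_pow (hω : 1 + ω + ω ^ 2 = 0) (x y : R) (r p : ℕ) :
    3 * ∑ m ∈ (range (p + 1)).filter (fun m => 3 ∣ r + m), x ^ m * y ^ (p - m) * p.choose m =
      (x + y) ^ p + ω ^ r * (ω * x + y) ^ p + (ω ^ r) ^ 2 * (ω ^ 2 * x + y) ^ p := by
  simp only [add_pow, mul_sum, sum_filter, ← sum_add_distrib]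
  refine sum_congr rfl fun m _ => ?_
  have h := ite_three_dvd_eq_one_add_pow_add_pow hω (r + m)
  calc 3 * (if 3 ∣ r + m then x ^ m * y ^ (p - m) * p.choose m else 0)
      = (if 3 ∣ r + m then 3 else 0) * (x ^ m * y ^ (p - m) * p.choose m) := by
        split_ifs <;> ring
    _ = _ := by rw [h]; ring

end RootsOfUnityFilter

lemma exp_mul_I_sq_mul_exp_add_exp_neg (φ θ : ℝ) :
    exp (φ * I) ^ 2 * exp (θ * I) + exp (-θ * I) = 2 * exp (φ * I) * Real.cos (θ + φ) := by
  rw [mul_assoc, mul_left_comm, ofReal_cos, two_cos, mul_add, ← exp_nat_mul, ← exp_add, ← exp_add,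
    ← exp_add]
  push_cast
  congr 2 <;> ring

lemma exp_pi_div_three_mul_I : exp (π / 3 * I) = 1 / 2 + √3 / 2 * I := by
  have h := exp_mul_I (π / 3 : ℝ)
  rw [← ofReal_cos, ← ofReal_sin, Real.cos_pi_div_three, Real.sin_pi_div_three] at h
  push_cast at h
  rw [h]

lemma exp_pi_div_three_mul_I_sq : exp (π / 3 * I) ^ 2 = exp (π / 3 * I) - 1 := by
  have h3 : (√3 : ℂ) ^ 2 = 3 := by norm_cast; simp
  rw [exp_pi_div_three_mul_I]
  linear_combination (I ^ 2 / 4) * h3 + (3 / 4) * I_sq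

lemma exp_pi_div_three_mul_I_pow_three : exp (π / 3 * I) ^ 3 = -1 := by
  rw [← exp_nat_mul, ← exp_pi_mul_I]
  congr 1
  push_cast
  ring

lemma exp_mul_I_pow_mul_exp_neg_mul_I_pow (θ : ℝ) {m p : ℕ} (hm : m ≤ p) :
    exp (I * (((2 * m - p) * θ : ℝ) : ℂ)) = exp (θ * I) ^ m * exp (-θ * I) ^ (p - m) := by
  rw [← exp_nat_mul, ← exp_nat_mul, ← exp_add]
  congr 1
  push_cast [hm]
  ring

lemma three_mul_sum_filter_choose_mul_exp (q : ℕ) (θ : ℝ) :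
    3 * ∑ m ∈ (range (q + 1 + 1)).filter (fun m => 3 ∣ q + m),
        ((q + 1).choose m : ℂ) * exp (I * (((2 * m - (q + 1 : ℕ)) * θ : ℝ) : ℂ)) =
      2 ^ (q + 1) * (Real.cos θ ^ (q + 1) + (-1) ^ q *
        (exp (π / 3 * I) * Real.cos (θ + π / 3) ^ (q + 1) +
          (1 - exp (π / 3 * I)) * Real.cos (θ - π / 3) ^ (q + 1))) := by
  set ζ := exp (π / 3 * I)
  have hζ2 : ζ ^ 2 = ζ - 1 := exp_pi_div_three_mul_I_sq
  have hζ3 : ζ ^ 3 = -1 := exp_pi_div_three_mul_I_pow_three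
  have hω : 1 + ζ ^ 2 + (ζ ^ 2) ^ 2 = 0 := by
    linear_combination (ζ ^ 2 + ζ + 1) * hζ2
  have h0 : exp (θ * I) + exp (-θ * I) = 2 * Real.cos θ := by
    rw [ofReal_cos, two_cos]
  have h1 : ζ ^ 2 * exp (θ * I) + exp (-θ * I) = 2 * ζ * Real.cos (θ + π / 3) := by
    simpa using exp_mul_I_sq_mul_exp_add_exp_neg (π / 3) θ
  have h2 : (ζ ^ 2) ^ 2 * exp (θ * I) + exp (-θ * I) = -(2 * ζ ^ 2 * Real.cos (θ - π / 3)) := by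
    have h := exp_mul_I_sq_mul_exp_add_exp_neg (2 * (π / 3)) θ
    have hexp : exp (↑(2 * (π / 3)) * I) = ζ ^ 2 := by
      rw [← exp_nat_mul]; push_cast; ring_nf
    have hcos : Real.cos (θ + 2 * (π / 3)) = -Real.cos (θ - π / 3) := by
      rw [← Real.cos_add_pi]; ring_nf
    rw [hexp, hcos] at h
    rw [h]; push_cast; ring
  have hA : (ζ ^ 2) ^ q * ζ ^ (q + 1) = (-1) ^ q * ζ :=
    calc _ = (ζ ^ 3) ^ q * ζ := by ring
      _ = _ := by rw [hζ3]
  have hB : ((ζ ^ 2) ^ q) ^ 2 * (ζ ^ 2) ^ (q + 1) = ζ ^ 2 :=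
    calc _ = ((ζ ^ 3) ^ 2) ^ q * ζ ^ 2 := by ring
      _ = _ := by rw [hζ3, neg_one_sq, one_pow, one_mul]
  have hsum : ∑ m ∈ (range (q + 1 + 1)).filter (fun m => 3 ∣ q + m),
        ((q + 1).choose m : ℂ) * exp (I * (((2 * m - (q + 1 : ℕ)) * θ : ℝ) : ℂ)) =
      ∑ m ∈ (range (q + 1 + 1)).filter (fun m => 3 ∣ q + m),
        exp (θ * I) ^ m * exp (-θ * I) ^ (q + 1 - m) * (q + 1).choose m := by
    refine sum_congr rfl fun m hm => ?_
    have hmq : m ≤ q + 1 := Nat.lt_succ_iff.mp (mem_range.mp (mem_filter.mp hm).1)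
    rw [exp_mul_I_pow_mul_exp_neg_mul_I_pow θ hmq, mul_comm]
  rw [hsum, three_mul_sum_filter_dvd_add_pow hω _ _ q (q + 1), h0, h1, h2, neg_pow]
  linear_combination (2 ^ (q + 1) * (Real.cos (θ + π / 3) : ℂ) ^ (q + 1)) * hA +
    ((-1) ^ (q + 1) * 2 ^ (q + 1) * (Real.cos (θ - π / 3) : ℂ) ^ (q + 1)) * hB +
    (-(-1) ^ q * 2 ^ (q + 1) * (Real.cos (θ - π / 3) : ℂ) ^ (q + 1)) * hζ2

/-- Evaluation on the unit circle of `f(z) = 2^{−p} Σ_{m ∈ I_p} C(p,m) z^m z̄^{p−m}`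
(Appendix D.1, proof of Lemma 3.1), where `I_p = {m ≤ p : 3 ∣ p + m − 1}`. -/
theorem stmt_8 (p : ℕ) (hp : 1 ≤ p) (θ : ℝ) :
    ((2 : ℂ) ^ p)⁻¹ * ∑ m ∈ (Finset.range (p + 1)).filter (fun m => 3 ∣ p + m - 1),
        (p.choose m : ℂ) * Complex.exp (Complex.I * (((2 * (m : ℝ) - (p : ℝ)) * θ : ℝ) : ℂ)) =
      ((1 / 3 * (Real.cos θ ^ p +
          (-1 : ℝ) ^ (p - 1) / 2 *
            (Real.cos (θ + Real.pi / 3) ^ p + Real.cos (θ - Real.pi / 3) ^ p)) : ℝ) : ℂ) +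
        Complex.I * ((Real.sqrt 3 / 6 * (-1 : ℝ) ^ (p - 1) *
          (Real.cos (θ + Real.pi / 3) ^ p - Real.cos (θ - Real.pi / 3) ^ p) : ℝ) : ℂ) := by
  obtain ⟨q, rfl⟩ : ∃ q, p = q + 1 := ⟨p - 1, by omega⟩
  have h := three_mul_sum_filter_choose_mul_exp q θ
  rw [exp_pi_div_three_mul_I] at h
  rw [filter_congr fun m _ => by rw [Nat.add_right_comm, Nat.add_sub_cancel],
    inv_mul_eq_iff_eq_mul₀ (pow_ne_zero _ two_ne_zero), Nat.add_sub_cancel]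
  push_cast at h ⊢
  linear_combination h / 3
end

section
/- For every integer p ≥ 1 and every z ∈ ℂ with |z| = 1, one has Σ_{m ∈ I_p} binom(p, m) z^m (conj z)^{p−m} ≠ 0, where I_p := {m ∈ ℕ : m ≤ p and 3 divides p + m − 1}. Equivalently, Σ_{m ∈ I_p} binom(p, m) exp(i(2m − p)θ) ≠ 0 for every θ ∈ ℝ. -/
open Complex Finset

noncomputable def zet : ℂ := Complex.exp ((Real.pi / 3 : ℝ) * Complex.I)

lemma zet_ne : zet ≠ 0 := Complex.exp_ne_zero _

lemma zet_val : zet = 1/2 + (Real.sqrt 3 : ℂ)/2 * Complex.I := by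
  rw [zet, Complex.exp_mul_I, ← Complex.ofReal_cos, ← Complex.ofReal_sin,
    Real.cos_pi_div_three, Real.sin_pi_div_three]
  push_cast
  ring

lemma zet_cube : zet ^ 3 = -1 := by
  rw [zet, ← Complex.exp_nat_mul, show ((3:ℕ):ℂ) * (((Real.pi/3 : ℝ):ℂ) * Complex.I)
      = (Real.pi : ℂ) * Complex.I by push_cast; ring, Complex.exp_pi_mul_I]

lemma zet_six : zet ^ 6 = 1 := by
  rw [show (6:ℕ) = 3*2 from rfl, pow_mul, zet_cube]; norm_num

lemma sqrt3_sq : ((Real.sqrt 3 : ℝ) : ℂ)^2 = 3 := by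
  rw [← Complex.ofReal_pow, Real.sq_sqrt (by norm_num : (3:ℝ) ≥ 0)]
  norm_num

lemma zet_sq : zet ^ 2 = -(1/2) + (Real.sqrt 3 : ℂ)/2 * Complex.I := by
  rw [zet_val]
  linear_combination (Complex.I^2/4) * sqrt3_sq + (3/4) * Complex.I_sq

lemma zet_four : zet ^ 4 = -(1/2) - (Real.sqrt 3 : ℂ)/2 * Complex.I := by
  rw [show (4:ℕ) = 2*2 from rfl, pow_mul, zet_sq]
  linear_combination (Complex.I^2/4) * sqrt3_sq + (3/4) * Complex.I_sq

lemma zet_quad : 1 + zet^2 + zet^4 = 0 := by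
  rw [zet_sq, zet_four]; ring

lemma zet_def : zet = Complex.exp ((Real.pi / 3 : ℝ) * Complex.I) := rfl

lemma indicator (n : ℕ) : (1 : ℂ) + (zet^2)^n + (zet^4)^n = if 3 ∣ n then 3 else 0 := by
  have h2 : (zet^2)^3 = 1 := by rw [← pow_mul]; exact zet_six
  have h4 : (zet^4)^3 = 1 := by rw [← pow_mul, show 4*3 = 6*2 from rfl, pow_mul, zet_six, one_pow]
  have hn := Nat.div_add_mod n 3
  have e2 : (zet^2)^n = (zet^2)^(n % 3) := by
    conv_lhs => rw [← hn]
    rw [pow_add, pow_mul, h2, one_pow, one_mul]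
  have e4 : (zet^4)^n = (zet^4)^(n % 3) := by
    conv_lhs => rw [← hn]
    rw [pow_add, pow_mul, h4, one_pow, one_mul]
  have hdvd : 3 ∣ n ↔ n % 3 = 0 := Nat.dvd_iff_mod_eq_zero
  rw [e2, e4]
  simp only [hdvd]
  have hlt : n % 3 = 0 ∨ n % 3 = 1 ∨ n % 3 = 2 := by omega
  rcases hlt with h | h | h <;> rw [h] <;> norm_num
  · linear_combination zet_quad
  · linear_combination zet_quad + zet^2 * zet_six

lemma binom (p : ℕ) (x : ℂ) :
    ∑ m ∈ range (p+1), (p.choose m : ℂ) * x^m = (1 + x)^p := by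
  rw [add_comm 1 x, add_pow]
  exact Finset.sum_congr rfl (fun m hm => by rw [one_pow]; ring)

lemma one_add_exp (φ : ℝ) :
    1 + Complex.exp (2*(φ:ℂ)*Complex.I) = 2 * (Real.cos φ : ℂ) * Complex.exp ((φ:ℂ)*Complex.I) := by
  have h1 : Complex.exp ((φ:ℂ)*Complex.I) * Complex.exp (-((φ:ℂ)*Complex.I)) = 1 := by
    rw [← Complex.exp_add]; simp
  have h2 : Complex.exp (2*(φ:ℂ)*Complex.I) = Complex.exp ((φ:ℂ)*Complex.I)^2 := by
    rw [sq, ← Complex.exp_add]; ring_nf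
  have h3 : (Real.cos φ : ℂ) = (Complex.exp ((φ:ℂ)*Complex.I) + Complex.exp (-((φ:ℂ)*Complex.I)))/2 := by
    rw [Complex.ofReal_cos, Complex.cos]; ring_nf
  rw [h2, h3]
  linear_combination -h1

lemma master (p : ℕ) (hp : 1 ≤ p) (θ : ℝ) :
    (3:ℂ) * zet^2 * (∑ m ∈ (Finset.range (p + 1)).filter (fun m => 3 ∣ p + m - 1),
        (p.choose m : ℂ) * Complex.exp (Complex.I * (((2 * (m : ℝ) - (p : ℝ)) * θ : ℝ) : ℂ)))
    = 2^p * (zet^2 * ((Real.cos θ : ℝ) : ℂ)^p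
        + zet^(3*p) * ((Real.cos (θ + Real.pi/3) : ℝ) : ℂ)^p
        + zet^4 * ((Real.cos (θ + 2*Real.pi/3) : ℝ) : ℂ)^p) := by
  set G : ℂ := Complex.exp (-(θ:ℂ)*Complex.I) with hG
  set E : ℂ := Complex.exp (2*(θ:ℂ)*Complex.I) with hE
  have hexp : ∀ m : ℕ, Complex.exp (Complex.I * (((2 * (m : ℝ) - (p : ℝ)) * θ : ℝ) : ℂ))
      = G^p * E^m := by
    intro m
    rw [hG, hE, ← Complex.exp_nat_mul, ← Complex.exp_nat_mul, ← Complex.exp_add]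
    congr 1
    push_cast
    ring
  -- step 1: unfilter
  have step1 : (3:ℂ) * (∑ m ∈ (Finset.range (p + 1)).filter (fun m => 3 ∣ p + m - 1),
        (p.choose m : ℂ) * Complex.exp (Complex.I * (((2 * (m : ℝ) - (p : ℝ)) * θ : ℝ) : ℂ)))
      = ∑ m ∈ range (p+1), ((p.choose m : ℂ) * (G^p * E^m))
          * (1 + (zet^2)^((p-1)+m) + (zet^4)^((p-1)+m)) := by
    rw [Finset.sum_filter, Finset.mul_sum]
    refine Finset.sum_congr rfl fun m hm => ?_
    rw [indicator ((p-1)+m), hexp m, show (p-1)+m = p+m-1 by omega]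
    split_ifs <;> ring
  rw [mul_comm (3:ℂ) (zet^2), mul_assoc, step1]
  -- step 3 : binomial
  have step3 : ∑ m ∈ range (p+1), ((p.choose m : ℂ) * (G^p * E^m))
          * (1 + (zet^2)^((p-1)+m) + (zet^4)^((p-1)+m))
      = G^p * (1+E)^p + G^p * (zet^2)^(p-1) * (1 + zet^2*E)^p
          + G^p * (zet^4)^(p-1) * (1 + zet^4*E)^p := by
    rw [← binom p E, ← binom p (zet^2*E), ← binom p (zet^4*E)]
    rw [Finset.mul_sum, Finset.mul_sum, Finset.mul_sum, ← Finset.sum_add_distrib,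
      ← Finset.sum_add_distrib]
    refine Finset.sum_congr rfl fun m hm => ?_
    simp only [pow_add, mul_pow]
    ring
  rw [step3]
  -- cos factorizations
  have h1m : zet^2 * E = Complex.exp (2*((θ + Real.pi/3 : ℝ):ℂ)*Complex.I) := by
    rw [zet_def, hE, ← Complex.exp_nat_mul, ← Complex.exp_add]
    congr 1; push_cast; ring
  have h2m : zet^4 * E = Complex.exp (2*((θ + 2*Real.pi/3 : ℝ):ℂ)*Complex.I) := by
    rw [zet_def, hE, ← Complex.exp_nat_mul, ← Complex.exp_add]
    congr 1; push_cast; ring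
  have h0 : 1 + E = 2 * ((Real.cos θ : ℝ):ℂ) * Complex.exp ((θ:ℂ)*Complex.I) :=
    one_add_exp θ
  have h1 : 1 + zet^2*E = 2 * ((Real.cos (θ + Real.pi/3) : ℝ):ℂ)
      * Complex.exp (((θ + Real.pi/3 : ℝ):ℂ)*Complex.I) := by
    rw [h1m]; exact one_add_exp _
  have h2 : 1 + zet^4*E = 2 * ((Real.cos (θ + 2*Real.pi/3) : ℝ):ℂ)
      * Complex.exp (((θ + 2*Real.pi/3 : ℝ):ℂ)*Complex.I) := by
    rw [h2m]; exact one_add_exp _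
  rw [h0, h1, h2]
  -- phase collection
  have hG0p : G^p * (Complex.exp ((θ:ℂ)*Complex.I))^p = 1 := by
    rw [← mul_pow, hG, ← Complex.exp_add]
    norm_num
  have hG1p : G^p * (Complex.exp (((θ + Real.pi/3 : ℝ):ℂ)*Complex.I))^p = zet^p := by
    rw [← mul_pow, hG, ← Complex.exp_add, zet_def]
    congr 1; push_cast; ring
  have hG2 : G * Complex.exp (((θ + 2*Real.pi/3 : ℝ):ℂ)*Complex.I) = zet^2 := by
    rw [hG, ← Complex.exp_add, zet_def, ← Complex.exp_nat_mul]
    congr 1; push_cast; ring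
  have hG2p : G^p * (Complex.exp (((θ + 2*Real.pi/3 : ℝ):ℂ)*Complex.I))^p = zet^(2*p) := by
    rw [← mul_pow, hG2, ← pow_mul]
  have hc1 : zet^2 * (zet^2)^(p-1) * zet^p = zet^(3*p) := by
    rw [← pow_mul, ← pow_add, ← pow_add, show 2 + 2*(p-1) + p = 3*p by omega]
  have hc2 : zet^2 * (zet^4)^(p-1) * zet^(2*p) = zet^4 := by
    rw [← pow_mul, ← pow_add, ← pow_add, show 2 + 4*(p-1) + 2*p = 6*(p-1) + 4 by omega,
      pow_add, pow_mul, zet_six, one_pow, one_mul]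
  linear_combination (zet^2 * (2:ℂ)^p * ((Real.cos θ : ℝ):ℂ)^p) * hG0p
    + (zet^2 * (zet^2)^(p-1) * (2:ℂ)^p * ((Real.cos (θ + Real.pi/3) : ℝ):ℂ)^p) * hG1p
    + (zet^2 * (zet^4)^(p-1) * (2:ℂ)^p * ((Real.cos (θ + 2*Real.pi/3) : ℝ):ℂ)^p) * hG2p
    + ((2:ℂ)^p * ((Real.cos (θ + Real.pi/3) : ℝ):ℂ)^p) * hc1
    + ((2:ℂ)^p * ((Real.cos (θ + 2*Real.pi/3) : ℝ):ℂ)^p) * hc2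

lemma reim (a b c ε : ℝ)
    (hS : zet^2 * (a:ℂ) + (ε:ℂ) * (b:ℂ) + zet^4 * (c:ℂ) = 0) : a = c ∧ ε * b = a := by
  rw [zet_sq, zet_four, Complex.ext_iff] at hS
  obtain ⟨h1, h2⟩ := hS
  simp at h1 h2
  have h3 : (0:ℝ) < Real.sqrt 3 := by positivity
  have hac : a = c := by
    have : Real.sqrt 3 * (a - c) = 0 := by linarith
    have := mul_eq_zero.mp this
    rcases this with h | h
    · exact absurd h h3.ne'
    · linarith
  exact ⟨hac, by linarith⟩

lemma even_contra (c s : ℝ) (hpy : s^2 + c^2 = 1)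
    (h1 : c^2 = (c*(1/2) - s*(Real.sqrt 3/2))^2)
    (h2 : c^2 = (c*(-(1/2)) - s*(Real.sqrt 3/2))^2) : False := by
  have h3 : (Real.sqrt 3)^2 = 3 := Real.sq_sqrt (by norm_num)
  have key : Real.sqrt 3 * (c * s) = 0 := by linear_combination h1 - h2
  have hsq3 : Real.sqrt 3 ≠ 0 := by positivity
  have hcs : c * s = 0 := by
    rcases mul_eq_zero.mp key with h | h
    · exact absurd h hsq3
    · exact h
  rcases mul_eq_zero.mp hcs with h | h <;> nlinarith [h1, h3, hpy]

lemma odd_contra (c s : ℝ) (hpy : s^2 + c^2 = 1)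
    (h1 : c*(1/2) - s*(Real.sqrt 3/2) = -c)
    (h2 : c = c*(-(1/2)) - s*(Real.sqrt 3/2)) : False := by
  have h3 : (Real.sqrt 3)^2 = 3 := Real.sq_sqrt (by norm_num)
  have hc : c = 0 := by linarith
  have hs : Real.sqrt 3 * s = 0 := by rw [hc] at h1; linarith
  have hsq3 : Real.sqrt 3 ≠ 0 := by positivity
  have hs0 : s = 0 := by
    rcases mul_eq_zero.mp hs with h | h
    · exact absurd h hsq3
    · exact h
  rw [hc, hs0] at hpy; norm_num at hpy

lemma part2 (p : ℕ) (hp : 1 ≤ p) (θ : ℝ) :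
    ∑ m ∈ (Finset.range (p + 1)).filter (fun m => 3 ∣ p + m - 1),
        (p.choose m : ℂ) *
          Complex.exp (Complex.I * (((2 * (m : ℝ) - (p : ℝ)) * θ : ℝ) : ℂ)) ≠ 0 := by
  intro hT
  have hM := master p hp θ
  rw [hT, mul_zero] at hM
  have h2p : (2:ℂ)^p ≠ 0 := pow_ne_zero _ two_ne_zero
  have hS0 := (mul_eq_zero.mp hM.symm).resolve_left h2p
  have hz3p : zet^(3*p) = (((-1:ℝ)^p : ℝ) : ℂ) := by
    rw [pow_mul, zet_cube]; push_cast; ring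
  rw [hz3p, ← Complex.ofReal_pow, ← Complex.ofReal_pow, ← Complex.ofReal_pow] at hS0
  obtain ⟨hac, hb⟩ := reim _ _ _ _ hS0
  have hc1 : Real.cos (θ + Real.pi/3)
      = Real.cos θ*(1/2) - Real.sin θ*(Real.sqrt 3/2) := by
    rw [Real.cos_add, Real.cos_pi_div_three, Real.sin_pi_div_three]
  have hc2 : Real.cos (θ + 2*Real.pi/3)
      = Real.cos θ*(-(1/2)) - Real.sin θ*(Real.sqrt 3/2) := by
    rw [show (2*Real.pi/3:ℝ) = Real.pi - Real.pi/3 by ring, Real.cos_add, Real.cos_pi_sub,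
      Real.sin_pi_sub, Real.cos_pi_div_three, Real.sin_pi_div_three]
  have hpy := Real.sin_sq_add_cos_sq θ
  rcases Nat.even_or_odd p with heven | hodd
  · -- even case
    have hb1 : Real.cos θ ^ p = Real.cos (θ + Real.pi/3) ^ p := by
      rw [heven.neg_one_pow, one_mul] at hb; exact hb.symm
    obtain ⟨k, hk⟩ := heven
    have hk0 : k ≠ 0 := by omega
    have sq_of : ∀ x y : ℝ, x ^ p = y ^ p → x^2 = y^2 := by
      intro x y hxy
      refine (pow_left_inj₀ (sq_nonneg x) (sq_nonneg y) hk0).mp ?_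
      rw [← pow_mul, ← pow_mul, show 2*k = p by omega]
      exact hxy
    have e1 := sq_of _ _ hb1
    have e2 := sq_of _ _ hac
    exact even_contra (Real.cos θ) (Real.sin θ) hpy (by rw [← hc1]; exact e1)
      (by rw [← hc2]; exact e2)
  · -- odd case
    have inj := (Odd.strictMono_pow (R := ℝ) hodd).injective
    have hA : Real.cos θ = Real.cos (θ + 2*Real.pi/3) := inj hac
    have hB : Real.cos (θ + Real.pi/3) = -Real.cos θ := by
      refine inj ?_
      show Real.cos (θ + Real.pi/3) ^ p = (-Real.cos θ) ^ p
      rw [Odd.neg_pow hodd]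
      rw [Odd.neg_one_pow hodd] at hb
      linarith
    exact odd_contra (Real.cos θ) (Real.sin θ) hpy (by rw [← hc1]; exact hB)
      (by rw [← hc2]; exact hA)

/-- Nonvanishing on the unit circle of the leading-order off-diagonal term of the
order-`p` effective Haldane symbol (crux of Lemma 3.1), with
`I_p = {m ≤ p : 3 ∣ p + m − 1}`. -/
theorem stmt_9 (p : ℕ) (hp : 1 ≤ p) :
    (∀ z : ℂ, ‖z‖ = 1 →
      ∑ m ∈ (Finset.range (p + 1)).filter (fun m => 3 ∣ p + m - 1),
        (p.choose m : ℂ) * z ^ m * (starRingEnd ℂ z) ^ (p - m) ≠ 0) ∧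
    (∀ θ : ℝ,
      ∑ m ∈ (Finset.range (p + 1)).filter (fun m => 3 ∣ p + m - 1),
        (p.choose m : ℂ) *
          Complex.exp (Complex.I * (((2 * (m : ℝ) - (p : ℝ)) * θ : ℝ) : ℂ)) ≠ 0) := by
  refine ⟨?_, part2 p hp⟩
  intro z hz
  have h := Complex.norm_mul_exp_arg_mul_I z
  rw [hz] at h
  push_cast at h
  rw [one_mul] at h
  obtain ⟨θ, hz1⟩ : ∃ θ : ℝ, z = Complex.exp ((θ : ℂ) * Complex.I) := ⟨z.arg, h.symm⟩
  have hconj : (starRingEnd ℂ) z = Complex.exp (-(θ : ℂ) * Complex.I) := by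
    rw [hz1, ← Complex.exp_conj]
    congr 1
    simp [map_mul, Complex.conj_ofReal, Complex.conj_I]
  have hcongr : ∀ m ∈ (Finset.range (p + 1)).filter (fun m => 3 ∣ p + m - 1),
      (p.choose m : ℂ) * z ^ m * (starRingEnd ℂ z) ^ (p - m)
      = (p.choose m : ℂ) * Complex.exp (Complex.I * (((2 * (m : ℝ) - (p : ℝ)) * θ : ℝ) : ℂ)) := by
    intro m hm
    have hmp : m ≤ p := Nat.lt_succ_iff.mp (Finset.mem_range.mp (Finset.mem_filter.mp hm).1)
    rw [hconj, mul_assoc]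
    congr 1
    rw [hz1, ← Complex.exp_nat_mul, ← Complex.exp_nat_mul, ← Complex.exp_add]
    congr 1
    rw [Nat.cast_sub hmp]
    push_cast
    ring
  rw [Finset.sum_congr rfl hcongr]
  exact part2 p hp θ
end

section
/- Let p ≥ 1 be an integer and θ ∈ ℝ. If p is odd, then cos^p(θ + π/3) = cos^p(θ − π/3) if and only if θ = kπ for some k ∈ ℤ. If p is even, then cos^p(θ + π/3) = cos^p(θ − π/3) if and only if θ = kπ/2 for some k ∈ ℤ. -/
/-! Since `cos (θ - π/3) - cos (θ + π/3) = √3 sin θ` and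
`cos (θ + π/3) + cos (θ - π/3) = cos θ`, the two cosines coincide exactly when `sin θ = 0`
and are opposite exactly when `cos θ = 0`. For odd `p` the equality of `p`-th powers means
equality of the bases; for even `p` it means equality up to sign, i.e.
`sin θ cos θ = sin (2θ) / 2 = 0`. -/

open Real

namespace Real

theorem cos_sub_pi_div_three_sub_cos_add_pi_div_three (θ : ℝ) :
    cos (θ - π / 3) - cos (θ + π / 3) = √3 * sin θ := by
  rw [cos_sub, cos_add, cos_pi_div_three, sin_pi_div_three]
  ring

theorem cos_add_pi_div_three_add_cos_sub_pi_div_three (θ : ℝ) :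
    cos (θ + π / 3) + cos (θ - π / 3) = cos θ := by
  rw [cos_sub, cos_add, cos_pi_div_three]
  ring

theorem cos_add_pi_div_three_eq_cos_sub_iff (θ : ℝ) :
    cos (θ + π / 3) = cos (θ - π / 3) ↔ sin θ = 0 := by
  rw [eq_comm, ← sub_eq_zero, cos_sub_pi_div_three_sub_cos_add_pi_div_three, mul_eq_zero]
  simp

theorem cos_add_pi_div_three_eq_neg_cos_sub_iff (θ : ℝ) :
    cos (θ + π / 3) = -cos (θ - π / 3) ↔ cos θ = 0 := by
  rw [eq_neg_iff_add_eq_zero, cos_add_pi_div_three_add_cos_sub_pi_div_three]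

theorem sin_eq_zero_iff_exists_int_mul_pi {θ : ℝ} :
    sin θ = 0 ↔ ∃ k : ℤ, θ = k * π :=
  sin_eq_zero_iff.trans <| exists_congr fun _ => eq_comm

theorem sin_mul_cos_eq_zero_iff {θ : ℝ} :
    sin θ * cos θ = 0 ↔ ∃ k : ℤ, θ = k * (π / 2) := by
  have h : sin θ * cos θ = sin (2 * θ) / 2 := by rw [sin_two_mul]; ring
  rw [h, div_eq_zero_iff, or_iff_left two_ne_zero, sin_eq_zero_iff_exists_int_mul_pi]
  exact exists_congr fun k => ⟨fun hk => by linarith, fun hk => by linarith⟩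

end Real

/-- Characterization of the vanishing of the imaginary part of `f(e^{iθ})` in
Appendix D.1 (Lemma 3.1): `cos^p(θ+π/3) = cos^p(θ−π/3)` iff `θ ∈ πℤ` (p odd)
resp. `θ ∈ (π/2)ℤ` (p even). -/
theorem stmt_10 (p : ℕ) (hp : 1 ≤ p) (θ : ℝ) :
    (Odd p →
      (Real.cos (θ + Real.pi / 3) ^ p = Real.cos (θ - Real.pi / 3) ^ p ↔
        ∃ k : ℤ, θ = k * Real.pi)) ∧
    (Even p →
      (Real.cos (θ + Real.pi / 3) ^ p = Real.cos (θ - Real.pi / 3) ^ p ↔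
        ∃ k : ℤ, θ = k * (Real.pi / 2))) := by
  rw [pow_eq_pow_iff_of_ne_zero (by omega), cos_add_pi_div_three_eq_cos_sub_iff,
    cos_add_pi_div_three_eq_neg_cos_sub_iff]
  refine ⟨fun hodd => ?_, fun heven => ?_⟩
  · rw [iff_false_intro (Nat.not_even_iff_odd.mpr hodd), and_false, or_false,
      sin_eq_zero_iff_exists_int_mul_pi]
  · rw [and_iff_left heven, ← mul_eq_zero, sin_mul_cos_eq_zero_iff]
end

section
/- Fix v > 0 and define 𝔞₁ := (v/√3)(1, 0), 𝔞₂ := (v/√3)(−1/2, √3/2), 𝔞₃ := (v/√3)(−1/2, −√3/2) in ℝ², the Dirac point K := (0, −4π/(3v)) ∈ ℝ², and the dual lattice vectors w₁ := (2π/v)(1/√3, 1), w₂ := (2π/v)(1/√3, −1). Then for every ξ ∈ ℝ², Σ_{j=1}^{3} exp(i ⟨ξ, 𝔞_j⟩) = 0 if and only if there exist s ∈ {1, −1} and m, n ∈ ℤ such that ξ = s·K + m·w₁ + n·w₂. -/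
/-- cos(2π/3) = -1/2. -/
lemma dirac_cos23 : Real.cos (2*Real.pi/3) = -(1/2) := by
  have : (2*Real.pi/3) = Real.pi - Real.pi/3 := by ring
  rw [this, Real.cos_pi_sub, Real.cos_pi_div_three]

/-- Key arithmetic lemma: solutions of `e^{3iA/2} + 2cos B = 0`. -/
lemma dirac_key (A B : ℝ) :
    Complex.exp (Complex.I * ((3*A/2 : ℝ) : ℂ)) + 2 * (Real.cos B : ℂ) = 0 ↔
    ∃ s : ℝ, (s = 1 ∨ s = -1) ∧ ∃ m n : ℤ,
      A = (m+n) * (2*Real.pi/3) ∧ B = -s*(2*Real.pi/3) + (m-n)*Real.pi := by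
  have hcos23 := dirac_cos23
  constructor
  · intro h
    have h' : Complex.exp (Complex.I * ((3*A/2 : ℝ) : ℂ)) = -(2 * (Real.cos B : ℂ)) := by
      linear_combination h
    have habs : |2 * Real.cos B| = 1 := by
      have := congrArg (fun z : ℂ => ‖z‖) h'
      rw [mul_comm, Complex.norm_exp_ofReal_mul_I, norm_neg] at this
      have h2 : ((2 * Real.cos B : ℝ) : ℂ) = 2 * (Real.cos B : ℂ) := by push_cast; ring
      rw [← h2, Complex.norm_real, Real.norm_eq_abs] at this
      exact this.symm
    rcases (abs_eq (by norm_num)).mp habs with hc | hc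
    · -- cos B = 1/2, exp = -1
      have hexp : Complex.exp (Complex.I * ((3*A/2 : ℝ) : ℂ)) = -1 := by
        rw [h']; rw [show ((2:ℂ) * (Real.cos B : ℂ)) = ((2 * Real.cos B : ℝ) : ℂ) by push_cast; ring, hc]
        norm_num
      have hone : Complex.exp (Complex.I * ((3*A/2 : ℝ) : ℂ) + Real.pi * Complex.I) = 1 := by
        rw [Complex.exp_add, hexp, Complex.exp_pi_mul_I]; ring
      obtain ⟨k, hk⟩ := Complex.exp_eq_one_iff.mp hone
      have hA : 3*A/2 + Real.pi = k * (2*Real.pi) := by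
        have h2 := congrArg Complex.im hk
        simpa using h2
      have hcB : Real.cos B = Real.cos (Real.pi/3) := by
        rw [Real.cos_pi_div_three]; linarith
      obtain ⟨j, hj⟩ := Real.cos_eq_cos_iff.mp hcB
      rcases hj with hj | hj
      · refine ⟨1, Or.inl rfl, k - j, k + j - 1, ?_, ?_⟩
        · push_cast; linarith
        · push_cast; linarith
      · refine ⟨-1, Or.inr rfl, k + j - 1, k - j, ?_, ?_⟩
        · push_cast; linarith
        · push_cast; linarith
    · -- cos B = -1/2, exp = 1
      have hexp : Complex.exp (Complex.I * ((3*A/2 : ℝ) : ℂ)) = 1 := by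
        rw [h', show ((2:ℂ) * (Real.cos B : ℂ)) = ((2 * Real.cos B : ℝ) : ℂ) by push_cast; ring, hc]
        norm_num
      obtain ⟨k, hk⟩ := Complex.exp_eq_one_iff.mp hexp
      have hA : 3*A/2 = k * (2*Real.pi) := by
        have h2 := congrArg Complex.im hk
        simpa using h2
      have hcB : Real.cos B = Real.cos (2*Real.pi/3) := by rw [hcos23]; linarith
      obtain ⟨j, hj⟩ := Real.cos_eq_cos_iff.mp hcB
      rcases hj with hj | hj
      · refine ⟨-1, Or.inr rfl, k - j, k + j, ?_, ?_⟩
        · push_cast; linarith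
        · push_cast; linarith
      · refine ⟨1, Or.inl rfl, k + j, k - j, ?_, ?_⟩
        · push_cast; linarith
        · push_cast; linarith
  · rintro ⟨s, hs, m, n, hA, hB⟩
    have hexp : Complex.exp (Complex.I * ((3*A/2 : ℝ) : ℂ)) = (-1)^(m+n) := by
      have : Complex.I * ((3*A/2 : ℝ) : ℂ) = ((m+n : ℤ) : ℂ) * (Real.pi * Complex.I) := by
        rw [hA]; push_cast; ring
      rw [this, Complex.exp_int_mul, Complex.exp_pi_mul_I]
    have hcB : Real.cos B = (-1)^(m-n) * (-(1/2)) := by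
      rcases hs with rfl | rfl
      · rw [show B = (m-n : ℤ) * Real.pi - 2*Real.pi/3 by rw [hB]; push_cast; ring,
          Real.cos_int_mul_pi_sub, hcos23]
      · rw [show B = (m-n : ℤ) * Real.pi - (-(2*Real.pi/3)) by rw [hB]; push_cast; ring,
          Real.cos_int_mul_pi_sub, Real.cos_neg, hcos23]
    rw [hexp, hcB]
    have hpow : ((-1 : ℂ))^(m+n) = ((-1 : ℂ))^(m-n) := by
      have heq : m + n = (m - n) + 2*n := by ring
      have h2n : ((-1:ℂ))^(2*n) = 1 := by
        rw [zpow_mul]; norm_num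
      rw [heq, zpow_add₀ (by norm_num : (-1:ℂ) ≠ 0), h2n, mul_one]
    push_cast
    rw [hpow]; ring

/-- Factoring out `e^{-iA/2}` from the band-crossing sum. -/
lemma dirac_fac (A B : ℝ) :
    (Complex.exp (Complex.I * ((A : ℝ) : ℂ)) +
      Complex.exp (Complex.I * ((-A/2 + B : ℝ) : ℂ)) +
      Complex.exp (Complex.I * ((-A/2 - B : ℝ) : ℂ)) = 0) ↔
    Complex.exp (Complex.I * ((3*A/2 : ℝ) : ℂ)) + 2 * (Real.cos B : ℂ) = 0 := by
  have e1 : Complex.I * ((A:ℝ):ℂ) = Complex.I * ((-A/2:ℝ):ℂ) + Complex.I * ((3*A/2:ℝ):ℂ) := by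
    push_cast; ring
  have e2 : Complex.I * ((-A/2+B:ℝ):ℂ) = Complex.I * ((-A/2:ℝ):ℂ) + (B:ℂ) * Complex.I := by
    push_cast; ring
  have e3 : Complex.I * ((-A/2-B:ℝ):ℂ) = Complex.I * ((-A/2:ℝ):ℂ) + (-(B:ℂ)) * Complex.I := by
    push_cast; ring
  have hfac : Complex.exp (Complex.I * ((A : ℝ) : ℂ)) +
      Complex.exp (Complex.I * ((-A/2 + B : ℝ) : ℂ)) +
      Complex.exp (Complex.I * ((-A/2 - B : ℝ) : ℂ)) =
      Complex.exp (Complex.I * ((-A/2 : ℝ) : ℂ)) *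
        (Complex.exp (Complex.I * ((3*A/2 : ℝ) : ℂ)) + 2 * (Real.cos B : ℂ)) := by
    rw [e1, e2, e3, Complex.exp_add, Complex.exp_add, Complex.exp_add,
      Complex.exp_mul_I, Complex.exp_mul_I]
    simp only [Complex.cos_neg, Complex.sin_neg, ← Complex.ofReal_cos]
    ring
  rw [hfac, mul_eq_zero]
  simp [Complex.exp_ne_zero]

/-- Section 3.1 of the paper: the band-crossing equation `Σ_j e^{i ξ·𝔞_j} = 0` of the
honeycomb lattice holds exactly at the two inequivalent Dirac points `±K` translated
by the dual lattice `ℤw₁ + ℤw₂`. -/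
theorem stmt_11 (v : ℝ) (hv : 0 < v) :
    let a1 : ℝ × ℝ := (v / Real.sqrt 3, 0)
    let a2 : ℝ × ℝ := ((v / Real.sqrt 3) * (-(1 / 2)), (v / Real.sqrt 3) * (Real.sqrt 3 / 2))
    let a3 : ℝ × ℝ := ((v / Real.sqrt 3) * (-(1 / 2)), (v / Real.sqrt 3) * (-(Real.sqrt 3 / 2)))
    let K : ℝ × ℝ := (0, -(4 * Real.pi) / (3 * v))
    let w1 : ℝ × ℝ := ((2 * Real.pi / v) * (1 / Real.sqrt 3), (2 * Real.pi / v) * 1)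
    let w2 : ℝ × ℝ := ((2 * Real.pi / v) * (1 / Real.sqrt 3), (2 * Real.pi / v) * (-1))
    ∀ ξ : ℝ × ℝ,
      Complex.exp (Complex.I * ((ξ.1 * a1.1 + ξ.2 * a1.2 : ℝ) : ℂ)) +
        Complex.exp (Complex.I * ((ξ.1 * a2.1 + ξ.2 * a2.2 : ℝ) : ℂ)) +
        Complex.exp (Complex.I * ((ξ.1 * a3.1 + ξ.2 * a3.2 : ℝ) : ℂ)) = 0 ↔
      ∃ s : ℝ, (s = 1 ∨ s = -1) ∧
        ∃ m n : ℤ, ξ = s • K + (m : ℝ) • w1 + (n : ℝ) • w2 := by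
  intro a1 a2 a3 K w1 w2 ξ
  have h3 : (0:ℝ) < Real.sqrt 3 := Real.sqrt_pos.mpr (by norm_num)
  have hsq : Real.sqrt 3 ^ 2 = 3 := Real.sq_sqrt (by norm_num)
  have hvs : v / Real.sqrt 3 ≠ 0 := div_ne_zero hv.ne' h3.ne'
  have hv2 : v / 2 ≠ 0 := div_ne_zero hv.ne' (by norm_num)
  simp only [a1, a2, a3, K, w1, w2]
  have p1 : ξ.1 * (v / Real.sqrt 3) + ξ.2 * 0 = ξ.1 * (v / Real.sqrt 3) := by ring
  have p2 : ξ.1 * ((v / Real.sqrt 3) * (-(1 / 2))) + ξ.2 * ((v / Real.sqrt 3) * (Real.sqrt 3 / 2))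
      = -(ξ.1 * (v / Real.sqrt 3))/2 + ξ.2 * (v / 2) := by
    field_simp
  have p3 : ξ.1 * ((v / Real.sqrt 3) * (-(1 / 2))) + ξ.2 * ((v / Real.sqrt 3) * (-(Real.sqrt 3 / 2)))
      = -(ξ.1 * (v / Real.sqrt 3))/2 - ξ.2 * (v / 2) := by
    field_simp
    ring_nf
  rw [p1, p2, p3, dirac_fac (ξ.1 * (v / Real.sqrt 3)) (ξ.2 * (v / 2)),
    dirac_key (ξ.1 * (v / Real.sqrt 3)) (ξ.2 * (v / 2))]
  apply exists_congr; intro s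
  apply and_congr_right; intro hs
  apply exists_congr; intro m
  apply exists_congr; intro n
  rw [Prod.ext_iff]
  simp only [Prod.smul_mk, Prod.mk_add_mk, smul_eq_mul, Prod.fst, Prod.snd]
  have e1 : ((m:ℝ)+(n:ℝ)) * (2*Real.pi/3)
      = (s * 0 + (m:ℝ) * ((2 * Real.pi / v) * (1 / Real.sqrt 3))
          + (n:ℝ) * ((2 * Real.pi / v) * (1 / Real.sqrt 3))) * (v / Real.sqrt 3) := by
    field_simp
    ring_nf
    rw [hsq]
    ring
  have e2 : -s*(2*Real.pi/3) + ((m:ℝ)-(n:ℝ))*Real.pi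
      = (s * (-(4 * Real.pi) / (3 * v)) + (m:ℝ) * ((2 * Real.pi / v) * 1)
          + (n:ℝ) * ((2 * Real.pi / v) * (-1))) * (v / 2) := by
    field_simp
    ring
  rw [e1, e2, mul_left_inj' hvs, mul_left_inj' hv2]
end

section
/- Let v, t₁, δ > 0 and let h ∈ ℝ with −1/2 < h < 1/4. Define F : ℝ² → ℝ² by F₁(ζ₁, ζ₂) := t₁((√3 v/2) ζ₂ + (δ v²/8)(ζ₂² − ζ₁² + 4h ζ₁²)) and F₂(ζ₁, ζ₂) := t₁(−(√3 v/2) ζ₁ + (δ v²/4)(1 + 2h) ζ₁ ζ₂). Set ζ¹ := (0, 0), ζ² := (0, −4√3/(δv)), ζ_{1,h} := (6/(δv(1+2h))) √((1 + (4/3)h)/(1 − 4h)), ζ_{2,h} := 2√3/(δv(1+2h)), ζ³ := (ζ_{1,h}, ζ_{2,h}), ζ⁴ := (−ζ_{1,h}, ζ_{2,h}). Then: (i) the zero set of F is exactly {ζ¹, ζ², ζ³, ζ⁴}; (ii) F is differentiable, det DF(ζ¹) > 0, and det DF(ζ^ℓ) < 0 for ℓ ∈ {2, 3, 4}; consequently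 Σ_{ζ : F(ζ)=0} −sign(det DF(ζ)) = 2. -/
lemma det_formula2 (L : (ℝ × ℝ) →L[ℝ] ℝ × ℝ) :
    L.det = (L (1,0)).1 * (L (0,1)).2 - (L (1,0)).2 * (L (0,1)).1 := by
  rw [ContinuousLinearMap.det, ← LinearMap.det_toMatrix (Module.Basis.finTwoProd ℝ),
    Matrix.det_fin_two]
  simp [LinearMap.toMatrix_apply, Module.Basis.finTwoProd]
  ring


set_option maxHeartbeats 1600000

/-- BDI computation for the second-order effective symbol of the gauge-transformed
Haldane model, regime `−1/2 < h < 1/4` (Section 5 of the paper): the planar vector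
field `(F₁, F₂)` has exactly four zeros with signs of Jacobian determinants
`(+, −, −, −)`, so the total charge is `+2`. -/
theorem stmt_17 (v t₁ δ h : ℝ) (hv : 0 < v) (ht₁ : 0 < t₁) (hδ : 0 < δ)
    (hh₁ : -(1 / 2) < h) (hh₂ : h < 1 / 4) :
    let F : ℝ × ℝ → ℝ × ℝ := fun ζ =>
      (t₁ * (Real.sqrt 3 * v / 2 * ζ.2 + δ * v ^ 2 / 8 * (ζ.2 ^ 2 - ζ.1 ^ 2 + 4 * h * ζ.1 ^ 2)),
        t₁ * (-(Real.sqrt 3 * v / 2) * ζ.1 + δ * v ^ 2 / 4 * (1 + 2 * h) * ζ.1 * ζ.2))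
    let ζ₁ : ℝ × ℝ := (0, 0)
    let ζ₂ : ℝ × ℝ := (0, -(4 * Real.sqrt 3) / (δ * v))
    let z1h : ℝ := 6 / (δ * v) * Real.sqrt ((1 + 4 / 3 * h) / (1 - 4 * h)) * (1 / (1 + 2 * h))
    let z2h : ℝ := 2 * Real.sqrt 3 / (δ * v) * (1 / (1 + 2 * h))
    let ζ₃ : ℝ × ℝ := (z1h, z2h)
    let ζ₄ : ℝ × ℝ := (-z1h, z2h)
    {ζ : ℝ × ℝ | F ζ = 0} = {ζ₁, ζ₂, ζ₃, ζ₄} ∧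
      Differentiable ℝ F ∧
      0 < (fderiv ℝ F ζ₁).det ∧
      (fderiv ℝ F ζ₂).det < 0 ∧
      (fderiv ℝ F ζ₃).det < 0 ∧
      (fderiv ℝ F ζ₄).det < 0 ∧
      ∑ᶠ ζ ∈ {ζ : ℝ × ℝ | F ζ = 0}, -Real.sign ((fderiv ℝ F ζ).det) = 2 := by
  intro F ζ₁ ζ₂ z1h z2h ζ₃ ζ₄
  have hs : Real.sqrt 3 ^ 2 = 3 := Real.sq_sqrt (by norm_num)
  have hs0 : 0 < Real.sqrt 3 := Real.sqrt_pos.mpr (by norm_num)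
  set s := Real.sqrt 3 with hs_def
  set D : (ℝ × ℝ) → (ℝ × ℝ) →L[ℝ] (ℝ × ℝ) := fun p =>
    (((t₁ * (δ*v^2/8) * (8*h-2) * p.1) • ContinuousLinearMap.fst ℝ ℝ ℝ
       + (t₁ * (s * v / 2 + δ*v^2/4 * p.2)) • ContinuousLinearMap.snd ℝ ℝ ℝ).prod
      ((t₁ * (-(s * v / 2) + δ*v^2/4*(1+2*h) * p.2)) • ContinuousLinearMap.fst ℝ ℝ ℝ
       + (t₁ * (δ*v^2/4*(1+2*h) * p.1)) • ContinuousLinearMap.snd ℝ ℝ ℝ)) with hD_def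
  have hF' : ∀ p : ℝ × ℝ, HasFDerivAt F (D p) p := by
    intro p
    have h1 : HasFDerivAt (fun ζ : ℝ×ℝ => ζ.1) (ContinuousLinearMap.fst ℝ ℝ ℝ) p := hasFDerivAt_fst
    have h2 : HasFDerivAt (fun ζ : ℝ×ℝ => ζ.2) (ContinuousLinearMap.snd ℝ ℝ ℝ) p := hasFDerivAt_snd
    have hc1 : HasFDerivAt (fun ζ : ℝ×ℝ =>
        t₁ * (s * v / 2 * ζ.2 + δ * v ^ 2 / 8 * (ζ.2 ^ 2 - ζ.1 ^ 2 + 4 * h * ζ.1 ^ 2)))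
        ((t₁ * (δ*v^2/8) * (8*h-2) * p.1) • ContinuousLinearMap.fst ℝ ℝ ℝ
          + (t₁ * (s * v / 2 + δ*v^2/4 * p.2)) • ContinuousLinearMap.snd ℝ ℝ ℝ) p := by
      have hfun : (fun ζ : ℝ×ℝ =>
          t₁ * (s * v / 2 * ζ.2 + δ * v ^ 2 / 8 * (ζ.2 ^ 2 - ζ.1 ^ 2 + 4 * h * ζ.1 ^ 2)))
          = (fun ζ : ℝ×ℝ =>
          t₁ * (s * v / 2 * ζ.2 + δ * v ^ 2 / 8 * (ζ.2 * ζ.2 - ζ.1 * ζ.1 + 4 * h * (ζ.1 * ζ.1)))) := by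
        funext ζ; ring
      rw [hfun]
      have key := (((h2.const_mul (s*v/2)).add
        ((((h2.mul h2).sub (h1.mul h1)).add ((h1.mul h1).const_mul (4*h))).const_mul
          (δ*v^2/8))).const_mul t₁)
      have heq : (t₁ * (δ*v^2/8) * (8*h-2) * p.1) • ContinuousLinearMap.fst ℝ ℝ ℝ
          + (t₁ * (s * v / 2 + δ*v^2/4 * p.2)) • ContinuousLinearMap.snd ℝ ℝ ℝ
          = t₁ • ((s * v / 2) • ContinuousLinearMap.snd ℝ ℝ ℝ +
            (δ * v ^ 2 / 8) •
              (p.2 • ContinuousLinearMap.snd ℝ ℝ ℝ + p.2 • ContinuousLinearMap.snd ℝ ℝ ℝ -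
                  (p.1 • ContinuousLinearMap.fst ℝ ℝ ℝ + p.1 • ContinuousLinearMap.fst ℝ ℝ ℝ) +
                (4 * h) • (p.1 • ContinuousLinearMap.fst ℝ ℝ ℝ + p.1 • ContinuousLinearMap.fst ℝ ℝ ℝ))) := by
        refine ContinuousLinearMap.ext fun x => ?_
        simp
        ring
      rw [heq]
      exact key
    have hc2 : HasFDerivAt (fun ζ : ℝ×ℝ =>
        t₁ * (-(s * v / 2) * ζ.1 + δ * v ^ 2 / 4 * (1 + 2 * h) * ζ.1 * ζ.2))
        ((t₁ * (-(s * v / 2) + δ*v^2/4*(1+2*h) * p.2)) • ContinuousLinearMap.fst ℝ ℝ ℝ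
          + (t₁ * (δ*v^2/4*(1+2*h) * p.1)) • ContinuousLinearMap.snd ℝ ℝ ℝ) p := by
      have key := (((h1.const_mul (-(s*v/2))).add
        ((h1.const_mul (δ*v^2/4*(1+2*h))).mul h2)).const_mul t₁)
      have heq : (t₁ * (-(s * v / 2) + δ*v^2/4*(1+2*h) * p.2)) • ContinuousLinearMap.fst ℝ ℝ ℝ
          + (t₁ * (δ*v^2/4*(1+2*h) * p.1)) • ContinuousLinearMap.snd ℝ ℝ ℝ
          = t₁ • ((-(s * v / 2)) • ContinuousLinearMap.fst ℝ ℝ ℝ +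
            ((δ * v ^ 2 / 4 * (1 + 2 * h) * p.1) • ContinuousLinearMap.snd ℝ ℝ ℝ
              + p.2 • ((δ * v ^ 2 / 4 * (1 + 2 * h)) • ContinuousLinearMap.fst ℝ ℝ ℝ))) := by
        refine ContinuousLinearMap.ext fun x => ?_
        simp
        ring
      rw [heq]
      exact key
    exact hc1.prodMk hc2
  have hdet : ∀ p : ℝ × ℝ, (D p).det =
      (t₁ * (δ*v^2/8) * (8*h-2) * p.1) * (t₁ * (δ*v^2/4*(1+2*h) * p.1))
      - (t₁ * (s * v / 2 + δ*v^2/4 * p.2)) * (t₁ * (-(s * v / 2) + δ*v^2/4*(1+2*h) * p.2)) := by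
    intro p
    rw [det_formula2]
    simp [hD_def]
    ring
  have hfd : ∀ p, fderiv ℝ F p = D p := fun p => (hF' p).fderiv
  have hFeq : ∀ p : ℝ × ℝ, F p =
      (t₁ * (s * v / 2 * p.2 + δ * v ^ 2 / 8 * (p.2 ^ 2 - p.1 ^ 2 + 4 * h * p.1 ^ 2)),
        t₁ * (-(s * v / 2) * p.1 + δ * v ^ 2 / 4 * (1 + 2 * h) * p.1 * p.2)) := fun p => rfl
  have hζ₁1 : (ζ₁ : ℝ × ℝ).1 = 0 := rfl
  have hζ₁2 : (ζ₁ : ℝ × ℝ).2 = 0 := rfl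
  have hζ₂1 : (ζ₂ : ℝ × ℝ).1 = 0 := rfl
  have hζ₂2 : (ζ₂ : ℝ × ℝ).2 = -(4 * s) / (δ * v) := rfl
  have hζ₃1 : (ζ₃ : ℝ × ℝ).1 = z1h := rfl
  have hζ₃2 : (ζ₃ : ℝ × ℝ).2 = z2h := rfl
  have hζ₄1 : (ζ₄ : ℝ × ℝ).1 = -z1h := rfl
  have hζ₄2 : (ζ₄ : ℝ × ℝ).2 = z2h := rfl
  have h2h : (0:ℝ) < 1 + 2*h := by linarith
  have h4h : (0:ℝ) < 1 - 4*h := by linarith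
  have h34 : (0:ℝ) < 3 + 4*h := by linarith
  have hδv : (0:ℝ) < δ * v := mul_pos hδ hv
  have hr0 : 0 < Real.sqrt ((1 + 4 / 3 * h) / (1 - 4 * h)) :=
    Real.sqrt_pos.mpr (div_pos (by linarith) h4h)
  have hr2 : Real.sqrt ((1 + 4 / 3 * h) / (1 - 4 * h)) ^ 2 = (1 + 4 / 3 * h) / (1 - 4 * h) :=
    Real.sq_sqrt (le_of_lt (div_pos (by linarith) h4h))
  set r := Real.sqrt ((1 + 4 / 3 * h) / (1 - 4 * h)) with hr_def
  have hz1def : z1h = 6 / (δ * v) * r * (1 / (1 + 2 * h)) := rfl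
  have hz2def : z2h = 2 * s / (δ * v) * (1 / (1 + 2 * h)) := rfl
  clear_value F D s r ζ₁ ζ₂ ζ₃ ζ₄ z1h z2h
  have hz10 : 0 < z1h := by
    rw [hz1def]
    exact mul_pos (mul_pos (by positivity) hr0) (by positivity)
  have hz20 : 0 < z2h := by
    rw [hz2def]
    exact mul_pos (by positivity) (by positivity)
  -- determinant signs
  have hdet1 : 0 < (fderiv ℝ F ζ₁).det := by
    rw [hfd, hdet]
    have : (t₁ * (δ*v^2/8) * (8*h-2) * (ζ₁:ℝ×ℝ).1) * (t₁ * (δ*v^2/4*(1+2*h) * (ζ₁:ℝ×ℝ).1))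
      - (t₁ * (s * v / 2 + δ*v^2/4 * (ζ₁:ℝ×ℝ).2)) * (t₁ * (-(s * v / 2) + δ*v^2/4*(1+2*h) * (ζ₁:ℝ×ℝ).2))
        = 3 * t₁^2 * v^2 / 4 := by
      rw [hζ₁1, hζ₁2]
      linear_combination (t₁^2 * v^2 / 4) * hs
    rw [this]
    positivity
  have hdet2 : (fderiv ℝ F ζ₂).det < 0 := by
    rw [hfd, hdet]
    have : (t₁ * (δ*v^2/8) * (8*h-2) * (ζ₂:ℝ×ℝ).1) * (t₁ * (δ*v^2/4*(1+2*h) * (ζ₂:ℝ×ℝ).1))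
      - (t₁ * (s * v / 2 + δ*v^2/4 * (ζ₂:ℝ×ℝ).2)) * (t₁ * (-(s * v / 2) + δ*v^2/4*(1+2*h) * (ζ₂:ℝ×ℝ).2))
        = -(3 * t₁^2 * v^2 * (3 + 4*h) / 4) := by
      rw [hζ₂1, hζ₂2]
      have hy : δ*v^2/4 * (-(4 * s) / (δ * v)) = -(s*v) := by
        field_simp
      have hy2 : δ*v^2/4*(1+2*h) * (-(4 * s) / (δ * v)) = -(s*v*(1+2*h)) := by
        field_simp
      rw [hy, hy2]
      linear_combination (-(t₁^2 * v^2 * (3 + 4*h) / 4)) * hs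
    rw [this]
    have : 0 < 3 * t₁^2 * v^2 * (3 + 4*h) / 4 := by positivity
    linarith
  have hc30 : -(s * v / 2) + δ*v^2/4*(1+2*h) * z2h = 0 := by
    rw [hz2def]
    field_simp
    ring
  have hdet34 : ∀ x : ℝ, x ≠ 0 → (t₁ * (δ*v^2/8) * (8*h-2) * x) * (t₁ * (δ*v^2/4*(1+2*h) * x))
      - (t₁ * (s * v / 2 + δ*v^2/4 * z2h)) * (t₁ * (-(s * v / 2) + δ*v^2/4*(1+2*h) * z2h)) < 0 := by
    intro x hx
    rw [hc30, mul_zero, mul_zero, sub_zero]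
    have hx2 : 0 < x^2 := by positivity
    have heq : (t₁ * (δ*v^2/8) * (8*h-2) * x) * (t₁ * (δ*v^2/4*(1+2*h) * x))
        = (t₁^2 * (δ^2*v^4/32) * ((8*h-2)*(1+2*h))) * x^2 := by ring
    rw [heq]
    apply mul_neg_of_neg_of_pos _ hx2
    apply mul_neg_of_pos_of_neg (by positivity)
    exact mul_neg_of_neg_of_pos (by linarith) h2h
  have hdet3 : (fderiv ℝ F ζ₃).det < 0 := by
    rw [hfd, hdet, hζ₃1, hζ₃2]
    exact hdet34 z1h (ne_of_gt hz10)
  have hdet4 : (fderiv ℝ F ζ₄).det < 0 := by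
    rw [hfd, hdet, hζ₄1, hζ₄2]
    exact hdet34 (-z1h) (by simpa using ne_of_gt hz10)
  have hT : t₁ ≠ 0 := ne_of_gt ht₁
  have hδv' : δ * v ≠ 0 := ne_of_gt hδv
  have h2h' : (1:ℝ) + 2*h ≠ 0 := ne_of_gt h2h
  have hv' : v ≠ 0 := ne_of_gt hv
  have hδ' : δ ≠ 0 := ne_of_gt hδ
  have hr2c : r^2 * (3*(1-4*h)) = 3 + 4*h := by
    rw [hr2]; field_simp
  have hz1sq : z1h^2 * ((δ*v)^2 * (1+2*h)^2 * (3*(1-4*h))) = 36*(3+4*h) := by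
    rw [hz1def]
    field_simp
    linear_combination 36 * hr2c
  have hcomp1 : ∀ x : ℝ, (s * v / 2 * z2h + δ * v ^ 2 / 8 * (z2h ^ 2 - x ^ 2 + 4 * h * x ^ 2) = 0)
      ↔ x^2 * ((δ*v)^2 * (1+2*h)^2 * (3*(1-4*h))) = 36*(3+4*h) := by
    intro x
    rw [hz2def]
    constructor
    · intro hE
      field_simp at hE
      have hM : (0:ℝ) < 2*δ*v^2*(δ*v*(1+2*h)) := mul_pos (by positivity) (mul_pos hδv h2h)
      refine mul_right_cancel₀ (ne_of_gt hM) ?_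
      linear_combination (-3*(2*δ*v^2*(δ*v*(1+2*h)))) * hE
        + (12*(3+4*h)*(2*δ*v^2*(δ*v*(1+2*h)))) * hs
    · intro hE
      field_simp
      linear_combination (-1/3:ℝ) * hE + (12+16*h) * hs
  have hset : {ζ : ℝ × ℝ | F ζ = 0} = {ζ₁, ζ₂, ζ₃, ζ₄} := by
    ext p
    simp only [Set.mem_setOf_eq, Set.mem_insert_iff, Set.mem_singleton_iff]
    rw [hFeq p, Prod.mk_eq_zero]
    constructor
    · rintro ⟨hp1, hp2⟩
      have hE1 : s * v / 2 * p.2 + δ * v ^ 2 / 8 * (p.2 ^ 2 - p.1 ^ 2 + 4 * h * p.1 ^ 2) = 0 :=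
        (mul_eq_zero.mp hp1).resolve_left hT
      have hE2 : -(s * v / 2) * p.1 + δ * v ^ 2 / 4 * (1 + 2 * h) * p.1 * p.2 = 0 :=
        (mul_eq_zero.mp hp2).resolve_left hT
      have hfac : p.1 * (δ*v*(1+2*h)*p.2 - 2*s) * (v/4) = 0 := by linear_combination hE2
      have hfac' : p.1 * (δ*v*(1+2*h)*p.2 - 2*s) = 0 :=
        (mul_eq_zero.mp hfac).resolve_right (by positivity)
      rcases mul_eq_zero.mp hfac' with hx | hy
      · have hfac2 : p.2 * (δ*v*p.2 + 4*s) * (v/8) = 0 := by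
          linear_combination hE1 + (δ*v^2/8*(1-4*h)*p.1) * hx
        have hfac2' : p.2 * (δ*v*p.2 + 4*s) = 0 :=
          (mul_eq_zero.mp hfac2).resolve_right (by positivity)
        rcases mul_eq_zero.mp hfac2' with hy0 | hq
        · exact Or.inl (Prod.ext_iff.mpr ⟨hx.trans hζ₁1.symm, hy0.trans hζ₁2.symm⟩)
        · have hy2 : p.2 = -(4*s)/(δ*v) := by
            field_simp
            linear_combination hq
          exact Or.inr (Or.inl (Prod.ext_iff.mpr ⟨hx.trans hζ₂1.symm, hy2.trans hζ₂2.symm⟩))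
      · have hy2 : p.2 = z2h := by
          rw [hz2def]
          field_simp
          linear_combination hy
        have hE1' : s * v / 2 * z2h + δ * v ^ 2 / 8 * (z2h ^ 2 - p.1 ^ 2 + 4 * h * p.1 ^ 2) = 0 := by
          rw [← hy2]; exact hE1
        have hsq := (hcomp1 p.1).mp hE1'
        have hMpos : (0:ℝ) < (δ*v)^2 * (1+2*h)^2 * (3*(1-4*h)) :=
          mul_pos (mul_pos (by positivity) (by positivity)) (by linarith)
        have hx2 : p.1^2 = z1h^2 := mul_right_cancel₀ (ne_of_gt hMpos) (hsq.trans hz1sq.symm)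
        have hfac3 : (p.1 - z1h) * (p.1 + z1h) = 0 := by linear_combination hx2
        rcases mul_eq_zero.mp hfac3 with hc | hc
        · exact Or.inr (Or.inr (Or.inl
            (Prod.ext_iff.mpr ⟨(sub_eq_zero.mp hc).trans hζ₃1.symm, hy2.trans hζ₃2.symm⟩)))
        · exact Or.inr (Or.inr (Or.inr
            (Prod.ext_iff.mpr ⟨(eq_neg_of_add_eq_zero_left hc).trans hζ₄1.symm,
              hy2.trans hζ₄2.symm⟩)))
    · rintro (rfl | rfl | rfl | rfl)
      · rw [hζ₁1, hζ₁2]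
        norm_num
      · rw [hζ₂1, hζ₂2]
        refine ⟨?_, by norm_num⟩
        field_simp
        ring
      · rw [hζ₃1, hζ₃2]
        have h1' := (hcomp1 z1h).mpr hz1sq
        exact ⟨by linear_combination t₁ * h1', by linear_combination (t₁ * z1h) * hc30⟩
      · rw [hζ₄1, hζ₄2]
        have h1' := (hcomp1 (-z1h)).mpr (by linear_combination hz1sq)
        exact ⟨by linear_combination t₁ * h1', by linear_combination (t₁ * (-z1h)) * hc30⟩
  have hY2 : -(4*s)/(δ*v) < 0 := div_neg_of_neg_of_pos (by linarith) hδv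
  have h12 : ζ₁ ≠ ζ₂ := fun e => by
    have he := congrArg Prod.snd e
    rw [hζ₁2, hζ₂2] at he
    linarith
  have h13 : ζ₁ ≠ ζ₃ := fun e => by
    have he := congrArg Prod.snd e
    rw [hζ₁2, hζ₃2] at he
    linarith
  have h14 : ζ₁ ≠ ζ₄ := fun e => by
    have he := congrArg Prod.snd e
    rw [hζ₁2, hζ₄2] at he
    linarith
  have h23 : ζ₂ ≠ ζ₃ := fun e => by
    have he := congrArg Prod.snd e
    rw [hζ₂2, hζ₃2] at he
    linarith
  have h24 : ζ₂ ≠ ζ₄ := fun e => by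
    have he := congrArg Prod.snd e
    rw [hζ₂2, hζ₄2] at he
    linarith
  have h34 : ζ₃ ≠ ζ₄ := fun e => by
    have he := congrArg Prod.fst e
    rw [hζ₃1, hζ₄1] at he
    linarith
  refine ⟨hset, fun p => (hF' p).differentiableAt, hdet1, hdet2, hdet3, hdet4, ?_⟩
  classical
  rw [hset, show ({ζ₁, ζ₂, ζ₃, ζ₄} : Set (ℝ × ℝ))
      = (↑({ζ₁, ζ₂, ζ₃, ζ₄} : Finset (ℝ × ℝ)) : Set (ℝ × ℝ)) by simp,
    finsum_mem_coe_finset]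
  rw [Finset.sum_insert (by simp [h12, h13, h14]),
    Finset.sum_insert (by simp [h23, h24]),
    Finset.sum_insert (by simp [h34]), Finset.sum_singleton]
  rw [Real.sign_of_pos hdet1, Real.sign_of_neg hdet2, Real.sign_of_neg hdet3,
    Real.sign_of_neg hdet4]
  norm_num
end

section
/- Let v, t₁, δ > 0 and let h ∈ ℝ with h > 1/4. Define F : ℝ² → ℝ² by F₁(ζ₁, ζ₂) := t₁((√3 v/2) ζ₂ + (δ v²/8)(ζ₂² − ζ₁² + 4h ζ₁²)) and F₂(ζ₁, ζ₂) := t₁(−(√3 v/2) ζ₁ + (δ v²/4)(1 + 2h) ζ₁ ζ₂). Then: (i) the zero set of F is exactly {(0, 0), (0, −4√3/(δv))}; (ii) F is differentiable, det DF(0, 0) > 0 and det DF(0, −4√3/(δv)) < 0; consequently Σ_{ζ : F(ζ)=0} −sign(det DF(ζ)) = 0. -/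
noncomputable def mk2 (a b c d : ℝ) : ℝ × ℝ →L[ℝ] ℝ × ℝ :=
  (a • ContinuousLinearMap.fst ℝ ℝ ℝ + b • ContinuousLinearMap.snd ℝ ℝ ℝ).prod
  (c • ContinuousLinearMap.fst ℝ ℝ ℝ + d • ContinuousLinearMap.snd ℝ ℝ ℝ)

lemma mk2_det (a b c d : ℝ) : (mk2 a b c d).det = a * d - b * c := by
  have : (mk2 a b c d).det = LinearMap.det ((mk2 a b c d) : ℝ × ℝ →ₗ[ℝ] ℝ × ℝ) := rfl
  rw [this, ← LinearMap.det_toMatrix (Module.Basis.finTwoProd ℝ), Matrix.det_fin_two]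
  simp [LinearMap.toMatrix_apply, mk2, Module.Basis.finTwoProd_zero, Module.Basis.finTwoProd_one]

lemma hF_deriv (v t₁ δ h : ℝ) (p : ℝ × ℝ) :
    HasFDerivAt (fun ζ : ℝ × ℝ =>
      (t₁ * (Real.sqrt 3 * v / 2 * ζ.2 + δ * v ^ 2 / 8 * (ζ.2 ^ 2 - ζ.1 ^ 2 + 4 * h * ζ.1 ^ 2)),
        t₁ * (-(Real.sqrt 3 * v / 2) * ζ.1 + δ * v ^ 2 / 4 * (1 + 2 * h) * ζ.1 * ζ.2)))
      (mk2 (t₁ * (δ * v ^ 2 / 8 * (8 * h - 2) * p.1))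
           (t₁ * (Real.sqrt 3 * v / 2 + δ * v ^ 2 / 4 * p.2))
           (t₁ * (-(Real.sqrt 3 * v / 2) + δ * v ^ 2 / 4 * (1 + 2 * h) * p.2))
           (t₁ * (δ * v ^ 2 / 4 * (1 + 2 * h) * p.1))) p := by
  have hx : HasFDerivAt (fun ζ : ℝ × ℝ => ζ.1) (ContinuousLinearMap.fst ℝ ℝ ℝ) p :=
    hasFDerivAt_fst
  have hy : HasFDerivAt (fun ζ : ℝ × ℝ => ζ.2) (ContinuousLinearMap.snd ℝ ℝ ℝ) p :=
    hasFDerivAt_snd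
  have H := (((hy.const_mul (Real.sqrt 3 * v / 2)).add
      (((((hy.mul hy).sub (hx.mul hx)).add ((hx.mul hx).const_mul (4 * h)))).const_mul
        (δ * v ^ 2 / 8))).const_mul t₁).prodMk
    (((hx.const_mul (-(Real.sqrt 3 * v / 2))).add
      ((hx.mul hy).const_mul (δ * v ^ 2 / 4 * (1 + 2 * h)))).const_mul t₁)
  refine (H.congr_fderiv ?_).congr_of_eventuallyEq
    (Filter.Eventually.of_forall fun ζ => ?_)
  · ext <;>
    simp [mk2, ContinuousLinearMap.prod_apply, ContinuousLinearMap.smul_apply,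
      ContinuousLinearMap.add_apply, ContinuousLinearMap.sub_apply, smul_eq_mul] <;> ring
  · simp only [Prod.mk.injEq, Pi.add_apply, Pi.sub_apply, Pi.mul_apply]; constructor <;> ring

/-- BDI computation for the second-order effective symbol of the gauge-transformed
Haldane model, regime `h > 1/4` (Section 5 of the paper): the planar vector field
`(F₁, F₂)` has exactly two zeros with Jacobian determinant signs `(+, −)`, so the
total charge is `0`. -/
theorem stmt_18 (v t₁ δ h : ℝ) (hv : 0 < v) (ht₁ : 0 < t₁) (hδ : 0 < δ)
    (hh : 1 / 4 < h) :
    let F : ℝ × ℝ → ℝ × ℝ := fun ζ =>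
      (t₁ * (Real.sqrt 3 * v / 2 * ζ.2 + δ * v ^ 2 / 8 * (ζ.2 ^ 2 - ζ.1 ^ 2 + 4 * h * ζ.1 ^ 2)),
        t₁ * (-(Real.sqrt 3 * v / 2) * ζ.1 + δ * v ^ 2 / 4 * (1 + 2 * h) * ζ.1 * ζ.2))
    let ζ₁ : ℝ × ℝ := (0, 0)
    let ζ₂ : ℝ × ℝ := (0, -(4 * Real.sqrt 3) / (δ * v))
    {ζ : ℝ × ℝ | F ζ = 0} = {ζ₁, ζ₂} ∧
      Differentiable ℝ F ∧
      0 < (fderiv ℝ F ζ₁).det ∧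
      (fderiv ℝ F ζ₂).det < 0 ∧
      ∑ᶠ ζ ∈ {ζ : ℝ × ℝ | F ζ = 0}, -Real.sign ((fderiv ℝ F ζ).det) = 0 := by
  intro F ζ₁ ζ₂
  set s3 := Real.sqrt 3 with hs3def
  have hs3 : s3 ^ 2 = 3 := Real.sq_sqrt (by norm_num)
  have hs3pos : 0 < s3 := Real.sqrt_pos.mpr (by norm_num)
  have hδv : δ * v ≠ 0 := by positivity
  have hc : (-(4 * s3) / (δ * v)) < 0 := by
    apply div_neg_of_neg_of_pos <;> [linarith; positivity]
  have hne : ζ₁ ≠ ζ₂ := fun hEq => hc.ne' (congrArg Prod.snd hEq)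
  -- pointwise derivative
  have hFd : ∀ p : ℝ × ℝ, HasFDerivAt F
      (mk2 (t₁ * (δ * v ^ 2 / 8 * (8 * h - 2) * p.1))
           (t₁ * (s3 * v / 2 + δ * v ^ 2 / 4 * p.2))
           (t₁ * (-(s3 * v / 2) + δ * v ^ 2 / 4 * (1 + 2 * h) * p.2))
           (t₁ * (δ * v ^ 2 / 4 * (1 + 2 * h) * p.1))) p :=
    fun p => hF_deriv v t₁ δ h p
  have hdiff : Differentiable ℝ F := fun p => (hFd p).differentiableAt
  -- zero set
  have hzero : {ζ : ℝ × ℝ | F ζ = 0} = {ζ₁, ζ₂} := by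
    ext ⟨x, y⟩
    simp only [Set.mem_setOf_eq, Set.mem_insert_iff, Set.mem_singleton_iff, F, ζ₁, ζ₂,
      Prod.mk.injEq, Prod.mk_eq_zero]
    constructor
    · rintro ⟨q1, q2⟩
      have q1' : s3 * v / 2 * y + δ * v ^ 2 / 8 * (y ^ 2 - x ^ 2 + 4 * h * x ^ 2) = 0 := by
        rcases mul_eq_zero.mp q1 with h' | h'
        · exact absurd h' ht₁.ne'
        · exact h'
      have q2' : x * (-(s3 * v / 2) + δ * v ^ 2 / 4 * (1 + 2 * h) * y) = 0 := by
        rcases mul_eq_zero.mp q2 with h' | h'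
        · exact absurd h' ht₁.ne'
        · linear_combination h'
      rcases mul_eq_zero.mp q2' with hx0 | hy0
      · subst hx0
        have q1'' : y * (s3 * v / 2 + δ * v ^ 2 / 8 * y) = 0 := by linear_combination q1'
        rcases mul_eq_zero.mp q1'' with hy' | hy'
        · exact Or.inl ⟨rfl, hy'⟩
        · refine Or.inr ⟨rfl, ?_⟩
          rw [eq_div_iff hδv]
          have hv' : v * (y * (δ * v) + 4 * s3) = 0 := by linear_combination 8 * hy'
          have := (mul_eq_zero.mp hv').resolve_left hv.ne'
          linarith
      · exfalso
        have hypos : 0 < y := by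
          have h1 : δ * v ^ 2 / 4 * (1 + 2 * h) * y = s3 * v / 2 := by linarith
          have h2 : 0 < δ * v ^ 2 / 4 * (1 + 2 * h) := by positivity
          by_contra hy
          push_neg at hy
          have h3 : δ * v ^ 2 / 4 * (1 + 2 * h) * y ≤ 0 :=
            mul_nonpos_of_nonneg_of_nonpos h2.le hy
          nlinarith [mul_pos hs3pos hv]
        nlinarith [mul_pos (mul_pos hs3pos hv) hypos,
          mul_pos (mul_pos hδ (pow_pos hv 2)) (pow_pos hypos 2),
          mul_nonneg (mul_nonneg hδ.le (sq_nonneg v)) (sq_nonneg x)]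
    · rintro (⟨hx0, hy0⟩ | ⟨hx0, hy0⟩) <;> subst hx0 <;> subst hy0
      · constructor <;> ring
      · constructor
        · field_simp
          ring_nf
        · ring
  -- determinants
  have hd1 : 0 < (fderiv ℝ F ζ₁).det := by
    rw [(hFd ζ₁).fderiv, mk2_det]
    show (0:ℝ) < _
    simp only [ζ₁]
    nlinarith [hs3, mul_pos (mul_pos ht₁ ht₁) (mul_pos hv hv)]
  have hd2 : (fderiv ℝ F ζ₂).det < 0 := by
    rw [(hFd ζ₂).fderiv, mk2_det]
    have hb : t₁ * (s3 * v / 2 + δ * v ^ 2 / 4 * (ζ₂ : ℝ × ℝ).2) = -(t₁ * s3 * v / 2) := by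
      simp only [ζ₂]
      field_simp
      ring
    have hcentry : t₁ * (-(s3 * v / 2) + δ * v ^ 2 / 4 * (1 + 2 * h) * (ζ₂ : ℝ × ℝ).2)
        = -(t₁ * s3 * v * (3 / 2 + 2 * h)) := by
      simp only [ζ₂]
      field_simp
      ring
    rw [hb, hcentry]
    simp only [ζ₂]
    have : t₁ * (δ * v ^ 2 / 8 * (8 * h - 2) * (0:ℝ)) * (t₁ * (δ * v ^ 2 / 4 * (1 + 2 * h) * 0))
        - -(t₁ * s3 * v / 2) * -(t₁ * s3 * v * (3 / 2 + 2 * h))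
        = -(t₁ ^ 2 * s3 ^ 2 * v ^ 2 * (3 / 2 + 2 * h) / 2) := by ring
    rw [this, hs3]
    nlinarith [mul_pos (mul_pos ht₁ ht₁) (mul_pos hv hv)]
  refine ⟨hzero, hdiff, hd1, hd2, ?_⟩
  rw [hzero, finsum_mem_pair hne, Real.sign_of_pos hd1, Real.sign_of_neg hd2]
  norm_num
end
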